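/- arXiv:2301.03950 — 6 statements merged into one kernel-verified Lean document; each statement's English description precedes it below -/
import Mathlib

section
/- A real (k,k)-form u on a complex vector space is non-negative (i.e., u ∧ (√-1)^{(n-k)²} β ∧ β̄ is a non-negative volume form for all (n-k,0)-forms β) if and only if u can be written as u = Σ_{s=1}^N (√-1)^{k²} α_s ∧ ᾱ_s for some (k,0)-forms α_1,…,α_N. -/
/-!
Put `m = n - k` and let `c(γ)` be the coefficient of an `(n,0)`-form `γ`. Expanding the wedge
products, the volume coefficient of `u ∧ (√-1)^{m²} β ∧ β̄` is `(√-1)^{n²} (√-1)^{-k²} S_u(β, β)`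
for a Hermitian form `S_u` (`sesq`) on coefficient arrays of `(m,0)`-forms, so `u` is
non-negative iff `(√-1)^{-k²} S_u` is positive semidefinite. A square `(√-1)^{k²} α ∧ ᾱ` has
`S(β, β) = (√-1)^{k²} |c(α ∧ β)|²`, which gives one direction. Conversely, write the matrix of
`(√-1)^{-k²} S_u` as `B^* B`. Each row of `B` vanishes on arrays with zero antisymmetrization,
hence is `β ↦ c(α_s ∧ β)` for some `(k,0)`-form `α_s`, so `S_u` is the form of
`∑ (√-1)^{k²} α_s ∧ ᾱ_s`; and `S_u` on pairs of basis arrays recovers the antisymmetrization of `u`.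
-/

open Complex Finset

/-- Coefficient model for `(p,q)`-forms on `ℂⁿ`: the value `a I J` is the coefficient of
`dz^{I 0} ∧ ⋯ ∧ dz^{I (p-1)} ∧ dz̄^{J 0} ∧ ⋯ ∧ dz̄^{J (q-1)}`, the form being the sum of these
over all index tuples. -/
abbrev PQForm (n p q : ℕ) : Type := (Fin p → Fin n) → (Fin q → Fin n) → ℂ

namespace PQForm

variable {n p q p' q' k : ℕ}

/-- Wedge product of forms, on coefficients. -/
def wedge (a : PQForm n p q) (b : PQForm n p' q') : PQForm n (p + p') (q + q') :=
  fun I J => (-1 : ℂ) ^ (q * p') *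
    (a (fun i => I (Fin.castAdd p' i)) (fun j => J (Fin.castAdd q' j)) *
     b (fun i => I (Fin.natAdd p i)) (fun j => J (Fin.natAdd q j)))

/-- Complex conjugate of a `(p,q)`-form, a `(q,p)`-form. -/
def conjForm (a : PQForm n p q) : PQForm n q p :=
  fun J I => (-1 : ℂ) ^ (p * q) * (starRingEnd ℂ) (a I J)

/-- Reinterpret a form along equalities of the degrees. -/
def castD (h1 : p = p') (h2 : q = q') (a : PQForm n p q) : PQForm n p' q' :=
  fun I J => a (fun i => I (Fin.cast h1 i)) (fun j => J (Fin.cast h2 j))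

/-- (Unnormalized) antisymmetrization of the coefficients; two coefficient arrays represent
the same differential form iff their antisymmetrizations agree. -/
noncomputable def alt (a : PQForm n p q) : PQForm n p q :=
  fun I J => ∑ σ : Equiv.Perm (Fin p), ∑ τ : Equiv.Perm (Fin q),
    (((Equiv.Perm.sign σ : ℤ) * (Equiv.Perm.sign τ : ℤ) : ℤ) : ℂ) * a (I ∘ σ) (J ∘ τ)

/-- A real `(p,p)`-form: it equals its own conjugate (as a form). -/
def IsRealForm (a : PQForm n p p) : Prop := alt (conjForm a) = alt a

/-- The total coefficient of an `(n,n)`-form with respect to `dz^1∧⋯∧dz^n∧dz̄^1∧⋯∧dz̄^n`. -/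
noncomputable def volCoeff (a : PQForm n n n) : ℂ := alt a id id

/-- A positive volume form `τ·(√-1 dz^1∧dz̄^1)∧⋯∧(√-1 dz^n∧dz̄^n)`, `τ > 0`; equivalently its
coefficient w.r.t. `dz^{1..n}∧dz̄^{1..n}` is `τ·(√-1)^{n²}` with `τ > 0`. -/
def IsPosVol (a : PQForm n n n) : Prop :=
  ∃ t : ℝ, 0 < t ∧ volCoeff a = (t : ℂ) * Complex.I ^ (n ^ 2)

/-- A non-negative volume form. -/
def IsNonnegVol (a : PQForm n n n) : Prop :=
  ∃ t : ℝ, 0 ≤ t ∧ volCoeff a = (t : ℂ) * Complex.I ^ (n ^ 2)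

/-- The `(n,n)`-form `u ∧ (√-1)^{(n-k)²} β ∧ β̄`, for `u` a `(k,k)`-form and `β` an
`(n-k,0)`-form. -/
def pairing (h : k ≤ n) (u : PQForm n k k) (β : PQForm n (n - k) 0) : PQForm n n n :=
  castD (by omega) (by omega)
    ((Complex.I ^ ((n - k) ^ 2)) • ((u.wedge β).wedge (conjForm β)))

/-- A `(k,k)`-form is non-negative if pairing with every `(n-k,0)`-form yields a
non-negative volume form. -/
def IsNonnegForm (h : k ≤ n) (u : PQForm n k k) : Prop :=
  ∀ β : PQForm n (n - k) 0, IsNonnegVol (pairing h u β)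

/-- A `(k,k)`-form is positive if pairing with every non-zero `(n-k,0)`-form yields a
positive volume form. -/
def IsPosForm (h : k ≤ n) (u : PQForm n k k) : Prop :=
  ∀ β : PQForm n (n - k) 0, alt β ≠ 0 → IsPosVol (pairing h u β)

/-- A decomposable `(p,0)`-form `β = β₁ ∧ ⋯ ∧ β_p` with each `β_i` a `(1,0)`-form. -/
def IsDecomposable (β : PQForm n p 0) : Prop :=
  ∃ b : Fin p → (Fin n → ℂ), β = fun I _ => ∏ j, b j (I j)

/-- Weak non-negativity: pairing with decomposable forms is a non-negative volume form. -/
def IsWeaklyNonnegForm (h : k ≤ n) (u : PQForm n k k) : Prop :=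
  ∀ β : PQForm n (n - k) 0, IsDecomposable β → IsNonnegVol (pairing h u β)

/-- Weak positivity: pairing with non-zero decomposable forms is a positive volume form. -/
def IsWeaklyPosForm (h : k ≤ n) (u : PQForm n k k) : Prop :=
  ∀ β : PQForm n (n - k) 0, IsDecomposable β → alt β ≠ 0 → IsPosVol (pairing h u β)

/-- Strong non-negativity: `u = ∑_s (√-1)^{p²} α_s ∧ ᾱ_s` (as forms) with each `α_s`
a decomposable `(p,0)`-form. -/
def IsStronglyNonnegForm (u : PQForm n p p) : Prop :=
  ∃ (N : ℕ) (α : Fin N → PQForm n p 0), (∀ s, IsDecomposable (α s)) ∧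
    alt u = alt (∑ s, castD (Nat.add_zero p) (Nat.zero_add p)
      ((Complex.I ^ (p ^ 2)) • ((α s).wedge (conjForm (α s)))))

end PQForm

theorem Fintype.sum_comm₄ {α β γ δ M : Type*} [Fintype α] [Fintype β] [Fintype γ] [Fintype δ]
    [AddCommMonoid M] (f : α → β → γ → δ → M) :
    ∑ a, ∑ b, ∑ c, ∑ d, f a b c d = ∑ c, ∑ d, ∑ a, ∑ b, f a b c d :=
  (Finset.sum_congr rfl fun _ _ => sum_comm.trans (Finset.sum_congr rfl fun _ _ => sum_comm)).trans
    (sum_comm.trans (Finset.sum_congr rfl fun _ _ => sum_comm))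

namespace Equiv.Perm

variable {α β γ : Type*}

def blockPerm (e : α ⊕ β ≃ γ) (π : Perm α) (ρ : Perm β) : Perm γ :=
  e.permCongr (π.sumCongr ρ)

@[simp]
lemma blockPerm_apply_inl (e : α ⊕ β ≃ γ) (π : Perm α) (ρ : Perm β) (a : α) :
    blockPerm e π ρ (e (.inl a)) = e (.inl (π a)) := by
  simp [blockPerm, permCongr_apply]

@[simp]
lemma blockPerm_apply_inr (e : α ⊕ β ≃ γ) (π : Perm α) (ρ : Perm β) (b : β) :
    blockPerm e π ρ (e (.inr b)) = e (.inr (ρ b)) := by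
  simp [blockPerm, permCongr_apply]

lemma mul_blockPerm_comp_inl (e : α ⊕ β ≃ γ) (σ : Perm γ) (π : Perm α) (ρ : Perm β) :
    ⇑(σ * blockPerm e π ρ) ∘ ⇑e ∘ Sum.inl = ⇑σ ∘ (⇑e ∘ Sum.inl) ∘ ⇑π :=
  funext fun a => by simp

lemma mul_blockPerm_comp_inr (e : α ⊕ β ≃ γ) (σ : Perm γ) (π : Perm α) (ρ : Perm β) :
    ⇑(σ * blockPerm e π ρ) ∘ ⇑e ∘ Sum.inr = ⇑σ ∘ (⇑e ∘ Sum.inr) ∘ ⇑ρ :=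
  funext fun b => by simp

lemma blockPerm_sumComm (e : α ⊕ β ≃ γ) (π : Perm α) (ρ : Perm β) :
    blockPerm ((sumComm β α).trans e) ρ π = blockPerm e π ρ := by
  ext x
  obtain ⟨a | b, rfl⟩ := e.surjective x <;> simp [blockPerm, permCongr_apply]

lemma sign_blockPerm [Fintype α] [Fintype β] [Fintype γ] [DecidableEq α] [DecidableEq β]
    [DecidableEq γ] (e : α ⊕ β ≃ γ) (π : Perm α) (ρ : Perm β) :
    sign (blockPerm e π ρ) = sign π * sign ρ := by
  simp [blockPerm, sign_permCongr, sign_sumCongr]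

lemma blockPerm_left_injective (e : α ⊕ β ≃ γ) :
    Function.Injective fun π : Perm α => blockPerm e π 1 := by
  intro π π' h
  ext a
  simpa using congr($h (e (.inl a)))

lemma exists_blockPerm_eq_of_forall_inr [Finite α] [Finite β] (e : α ⊕ β ≃ γ) {τ : Perm γ}
    (hτ : ∀ b, τ (e (.inr b)) = e (.inr b)) : ∃ π, τ = blockPerm e π 1 := by
  have hmaps : Set.MapsTo (e.symm.permCongr τ) (Set.range Sum.inr) (Set.range Sum.inr) := by
    rintro _ ⟨b, rfl⟩
    exact ⟨b, by simp [permCongr_apply, hτ]⟩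
  obtain ⟨⟨π, ρ⟩, hπρ⟩ := mem_sumCongrHom_range_of_perm_mapsTo_inl
    ((perm_mapsTo_inl_iff_mapsTo_inr _).mpr hmaps)
  have hρ : ρ = 1 := by
    ext b
    simpa [permCongr_apply, hτ] using congr($hπρ (.inr b))
  refine ⟨π, ?_⟩
  ext x
  obtain ⟨y, rfl⟩ := e.surjective x
  simpa [blockPerm, permCongr_apply, hρ] using congr(e ($hπρ y)).symm

lemma sum_ite_comp_inr_eq {M : Type*} [AddCommMonoid M] [Fintype α] [Fintype β] [Fintype γ]
    [DecidableEq α] [DecidableEq β] [DecidableEq γ] (e : α ⊕ β ≃ γ) (σ₀ : Perm γ) (G : Perm γ → M) :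
    ∑ σ : Perm γ, (if ⇑σ ∘ ⇑e ∘ Sum.inr = ⇑σ₀ ∘ ⇑e ∘ Sum.inr then G σ else 0) =
      ∑ π : Perm α, G (σ₀ * blockPerm e π 1) := by
  rw [← Finset.sum_filter]
  symm
  refine Finset.sum_nbij (σ₀ * blockPerm e · 1) (fun π _ => ?_)
    (fun π _ π' _ h => blockPerm_left_injective e (mul_left_cancel h)) (fun σ hσ => ?_)
    fun _ _ => rfl
  · simp only [Finset.mem_filter, Finset.mem_univ, true_and]
    ext b
    simp
  · simp only [Finset.coe_filter, Finset.mem_univ, true_and, Set.mem_ofPred_eq] at hσ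
    obtain ⟨π, hπ⟩ := exists_blockPerm_eq_of_forall_inr e (τ := σ₀⁻¹ * σ) fun b => by
      simp [show σ (e (.inr b)) = σ₀ (e (.inr b)) from congrFun hσ b]
    exact ⟨π, Finset.mem_coe.mpr (Finset.mem_univ π), by simp [← hπ]⟩

lemma sum_ite_comp_inl_eq {M : Type*} [AddCommMonoid M] [Fintype α] [Fintype β] [Fintype γ]
    [DecidableEq α] [DecidableEq β] [DecidableEq γ] (e : α ⊕ β ≃ γ) (σ₀ : Perm γ) (G : Perm γ → M) :
    ∑ σ : Perm γ, (if ⇑σ ∘ ⇑e ∘ Sum.inl = ⇑σ₀ ∘ ⇑e ∘ Sum.inl then G σ else 0) =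
      ∑ ρ : Perm β, G (σ₀ * blockPerm e 1 ρ) := by
  have h := sum_ite_comp_inr_eq ((sumComm β α).trans e) σ₀ G
  simp only [blockPerm_sumComm] at h
  exact h

end Equiv.Perm

section

open Matrix
open scoped ComplexOrder InnerProductSpace MatrixOrder

lemma Matrix.posSemidef_of_forall_dotProduct_mulVec_nonneg {ι : Type*} [Fintype ι] [DecidableEq ι]
    {H : Matrix ι ι ℂ} (hH : ∀ x, 0 ≤ star x ⬝ᵥ H *ᵥ x) : H.PosSemidef := by
  have hinner : ∀ x : EuclideanSpace ℂ ι,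
      ⟪H.toEuclideanLin x, x⟫_ℂ = star (WithLp.ofLp x) ⬝ᵥ H *ᵥ WithLp.ofLp x := by
    intro x
    rw [EuclideanSpace.inner_eq_star_dotProduct, ofLp_toLpLin, toLin'_apply, dotProduct_star,
      dotProduct_comm]
    exact Complex.conj_eq_iff_im.mpr (Complex.nonneg_iff.mp (hH _)).2.symm
  rw [← isPositive_toEuclideanLin_iff, LinearMap.isPositive_iff]
  refine ⟨(LinearMap.isSymmetric_iff_inner_map_self_real _).2 fun x => ?_, fun x => ?_⟩ <;>
    rw [hinner]
  · exact Complex.conj_eq_iff_im.mpr (Complex.nonneg_iff.mp (hH _)).2.symm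
  · exact hH _

lemma Matrix.PosSemidef.exists_eq_conjTranspose_mul_self {𝕜 ι : Type*} [RCLike 𝕜] [Fintype ι]
    [DecidableEq ι] {H : Matrix ι ι 𝕜} (hH : H.PosSemidef) : ∃ B : Matrix ι ι 𝕜, H = Bᴴ * B :=
  CStarAlgebra.nonneg_iff_eq_star_mul_self.mp hH.nonneg

end

namespace PQForm

open Equiv Equiv.Perm Function Matrix

variable {n k m : ℕ}

noncomputable def sgn {N : ℕ} (σ : Perm (Fin N)) : ℂ := ((sign σ : ℤ) : ℂ)

@[simp]
lemma sgn_one {N : ℕ} : sgn (1 : Perm (Fin N)) = 1 := by simp [sgn]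

@[simp]
lemma sgn_mul {N : ℕ} (σ τ : Perm (Fin N)) : sgn (σ * τ) = sgn σ * sgn τ := by simp [sgn]

@[simp]
lemma sgn_mul_self {N : ℕ} (σ : Perm (Fin N)) : sgn σ * sgn σ = 1 := by
  rcases Int.units_eq_one_or (sign σ) with h | h <;> simp [sgn, h]

lemma sgn_ne_zero {N : ℕ} (σ : Perm (Fin N)) : sgn σ ≠ 0 :=
  fun h => by simpa [h] using sgn_mul_self σ

@[simp]
lemma conj_sgn {N : ℕ} (σ : Perm (Fin N)) : starRingEnd ℂ (sgn σ) = sgn σ := by simp [sgn]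

section Antisymm

variable {X : Type*}

noncomputable def antisymm (w : (Fin m → X) → ℂ) : (Fin m → X) → ℂ :=
  fun J => ∑ ρ : Perm (Fin m), sgn ρ * w (J ∘ ⇑ρ)

lemma antisymm_comp_perm (w : (Fin m → X) → ℂ) (J : Fin m → X) (ρ : Perm (Fin m)) :
    antisymm w (J ∘ ⇑ρ) = sgn ρ * antisymm w J := by
  rw [antisymm, antisymm, mul_sum]
  refine Fintype.sum_equiv (Equiv.mulLeft ρ) _ _ fun ρ' => ?_
  have h := sgn_mul_self ρ
  simp only [coe_mulLeft, sgn_mul, Perm.coe_mul, comp_assoc]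
  linear_combination -sgn ρ' * w (J ∘ ⇑ρ ∘ ⇑ρ') * h

lemma antisymm_apply_of_not_injective (w : (Fin m → X) → ℂ) {J : Fin m → X}
    (hJ : ¬Injective J) : antisymm w J = 0 := by
  obtain ⟨a, b, hab, hne⟩ : ∃ a b, J a = J b ∧ a ≠ b := by
    simpa [Injective] using hJ
  have hswap : J ∘ ⇑(swap a b) = J := by
    ext x
    rcases eq_or_ne x a with rfl | hxa
    · simp [hab]
    rcases eq_or_ne x b with rfl | hxb
    · simp [hab]
    · simp [swap_apply_of_ne_of_ne hxa hxb]
  have h := antisymm_comp_perm w J (swap a b)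
  rw [hswap, sgn, sign_swap hne] at h
  push_cast at h
  linear_combination h / 2

lemma antisymm_sub_smul (w₁ w₂ : (Fin m → X) → ℂ) (c : ℂ) :
    antisymm (w₁ - c • w₂) = antisymm w₁ - c • antisymm w₂ := by
  ext J
  simp only [antisymm, Pi.sub_apply, Pi.smul_apply, smul_eq_mul, mul_sub, sum_sub_distrib,
    mul_left_comm _ c, ← mul_sum]

lemma antisymm_antisymm (w : (Fin m → X) → ℂ) :
    antisymm (antisymm w) = (m.factorial : ℂ) • antisymm w := by
  ext J
  simp [antisymm.eq_def (antisymm w), antisymm_comp_perm, ← mul_assoc, Fintype.card_perm]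

end Antisymm

lemma alt_apply_eq_antisymm_left {p q : ℕ} (u : PQForm n p q) (I : Fin p → Fin n)
    (J : Fin q → Fin n) : alt u I J = antisymm (fun I' => antisymm (u I') J) I := by
  simp only [alt, antisymm, mul_sum]
  refine sum_congr rfl fun π _ => sum_congr rfl fun π' _ => ?_
  push_cast [sgn]
  ring

lemma alt_apply_eq_antisymm_right {p q : ℕ} (u : PQForm n p q) (I : Fin p → Fin n)
    (J : Fin q → Fin n) :
    alt u I J = antisymm (fun J' => antisymm (fun I' => u I' J') I) J := by
  rw [alt, sum_comm]
  simp only [antisymm, mul_sum]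
  refine sum_congr rfl fun π' _ => sum_congr rfl fun π _ => ?_
  push_cast [sgn]
  ring

lemma alt_apply_of_not_injective_left {p q : ℕ} (u : PQForm n p q) {I : Fin p → Fin n}
    (hI : ¬Injective I) (J : Fin q → Fin n) : alt u I J = 0 := by
  rw [alt_apply_eq_antisymm_left, antisymm_apply_of_not_injective _ hI]

lemma alt_apply_of_not_injective_right {p q : ℕ} (u : PQForm n p q) (I : Fin p → Fin n)
    {J : Fin q → Fin n} (hJ : ¬Injective J) : alt u I J = 0 := by
  rw [alt_apply_eq_antisymm_right, antisymm_apply_of_not_injective _ hJ]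

def blockEquiv (hk : k + m = n) : Fin k ⊕ Fin m ≃ Fin n := finSumFinEquiv.trans (finCongr hk)

abbrev leftIdx (hk : k + m = n) : Fin k → Fin n := ⇑(blockEquiv hk) ∘ Sum.inl

abbrev rightIdx (hk : k + m = n) : Fin m → Fin n := ⇑(blockEquiv hk) ∘ Sum.inr

lemma leftIdx_injective (hk : k + m = n) : Injective (leftIdx hk) :=
  (blockEquiv hk).injective.comp Sum.inl_injective

lemma rightIdx_injective (hk : k + m = n) : Injective (rightIdx hk) :=
  (blockEquiv hk).injective.comp Sum.inr_injective

lemma sgn_blockPerm (hk : k + m = n) (π : Perm (Fin k)) (ρ : Perm (Fin m)) :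
    sgn (blockPerm (blockEquiv hk) π ρ) = sgn π * sgn ρ := by
  simp [sgn, sign_blockPerm]

/-- Up to the sign `(-1)^{km}`, the `volCoeff` of `u ∧ w ∧ v̄` for `(m,0)`-forms with
coefficients `w` and `v`. -/
noncomputable def sesq (hk : k + m = n) (u : PQForm n k k) (w v : (Fin m → Fin n) → ℂ) : ℂ :=
  ∑ σ : Perm (Fin n), ∑ τ : Perm (Fin n),
    sgn σ * sgn τ * u (⇑σ ∘ leftIdx hk) (⇑τ ∘ leftIdx hk) * w (⇑σ ∘ rightIdx hk) *
      starRingEnd ℂ (v (⇑τ ∘ rightIdx hk))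

lemma sesq_alt (hk : k + m = n) (u : PQForm n k k) (w v : (Fin m → Fin n) → ℂ) :
    sesq hk (alt u) w v = (k.factorial : ℂ) ^ 2 * sesq hk u w v := by
  have hsum : ∀ π π' : Perm (Fin k), sesq hk u w v = ∑ σ : Perm (Fin n), ∑ τ : Perm (Fin n),
      sgn σ * sgn τ * (sgn π * sgn π' * u (⇑σ ∘ leftIdx hk ∘ ⇑π) (⇑τ ∘ leftIdx hk ∘ ⇑π')) *
        w (⇑σ ∘ rightIdx hk) * starRingEnd ℂ (v (⇑τ ∘ rightIdx hk)) := fun π π' => by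
    rw [sesq, ← Equiv.sum_comp (Equiv.mulRight (blockPerm (blockEquiv hk) π 1))]
    refine sum_congr rfl fun σ _ => ?_
    rw [← Equiv.sum_comp (Equiv.mulRight (blockPerm (blockEquiv hk) π' 1))]
    refine sum_congr rfl fun τ _ => ?_
    simp only [coe_mulRight, mul_blockPerm_comp_inl, mul_blockPerm_comp_inr, sgn_mul,
      sgn_blockPerm, sgn_one, coe_one, comp_id]
    ring
  calc sesq hk (alt u) w v
      = ∑ π : Perm (Fin k), ∑ π' : Perm (Fin k), ∑ σ : Perm (Fin n), ∑ τ : Perm (Fin n),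
          sgn σ * sgn τ * (sgn π * sgn π' * u (⇑σ ∘ leftIdx hk ∘ ⇑π) (⇑τ ∘ leftIdx hk ∘ ⇑π')) *
            w (⇑σ ∘ rightIdx hk) * starRingEnd ℂ (v (⇑τ ∘ rightIdx hk)) := by
        simp only [sesq, alt, mul_sum, sum_mul]
        rw [Fintype.sum_comm₄]
        refine sum_congr rfl fun π _ => sum_congr rfl fun π' _ =>
          sum_congr rfl fun σ _ => sum_congr rfl fun τ _ => ?_
        push_cast [sgn, comp_assoc]
        ring
    _ = ∑ _π : Perm (Fin k), ∑ _π' : Perm (Fin k), sesq hk u w v := by simp only [← hsum]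
    _ = (k.factorial : ℂ) ^ 2 * sesq hk u w v := by simp [Fintype.card_perm]; ring

lemma sesq_eq_of_alt_eq (hk : k + m = n) {u u' : PQForm n k k} (hu : alt u = alt u')
    (w v : (Fin m → Fin n) → ℂ) : sesq hk u w v = sesq hk u' w v := by
  have hfac : (k.factorial : ℂ) ^ 2 ≠ 0 := by simp [Nat.factorial_ne_zero]
  apply mul_left_cancel₀ hfac
  rw [← sesq_alt, ← sesq_alt, hu]

lemma sesq_antisymm (hk : k + m = n) (u : PQForm n k k) (w v : (Fin m → Fin n) → ℂ) :
    sesq hk u (antisymm w) v = (m.factorial : ℂ) * sesq hk u w v := by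
  have hsum : ∀ ρ : Perm (Fin m), sesq hk u w v = ∑ σ : Perm (Fin n), ∑ τ : Perm (Fin n),
      sgn σ * sgn τ * u (⇑σ ∘ leftIdx hk) (⇑τ ∘ leftIdx hk) *
        (sgn ρ * w (⇑σ ∘ rightIdx hk ∘ ⇑ρ)) * starRingEnd ℂ (v (⇑τ ∘ rightIdx hk)) := fun ρ => by
    rw [sesq, ← Equiv.sum_comp (Equiv.mulRight (blockPerm (blockEquiv hk) 1 ρ))]
    refine sum_congr rfl fun σ _ => sum_congr rfl fun τ _ => ?_
    simp only [coe_mulRight, mul_blockPerm_comp_inl, mul_blockPerm_comp_inr, sgn_mul,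
      sgn_blockPerm, sgn_one, coe_one, comp_id]
    ring
  calc sesq hk u (antisymm w) v
      = ∑ ρ : Perm (Fin m), ∑ σ : Perm (Fin n), ∑ τ : Perm (Fin n),
          sgn σ * sgn τ * u (⇑σ ∘ leftIdx hk) (⇑τ ∘ leftIdx hk) *
            (sgn ρ * w (⇑σ ∘ rightIdx hk ∘ ⇑ρ)) * starRingEnd ℂ (v (⇑τ ∘ rightIdx hk)) := by
        simp only [sesq, antisymm, mul_sum, sum_mul]
        exact (sum_congr rfl fun σ _ => sum_comm).trans sum_comm
    _ = ∑ _ρ : Perm (Fin m), sesq hk u w v := by simp only [← hsum]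
    _ = (m.factorial : ℂ) * sesq hk u w v := by simp [Fintype.card_perm]

lemma sesq_eq_zero_of_antisymm_eq_zero (hk : k + m = n) (u : PQForm n k k)
    {w : (Fin m → Fin n) → ℂ} (hw : antisymm w = 0) (v : (Fin m → Fin n) → ℂ) :
    sesq hk u w v = 0 := by
  have h := sesq_antisymm hk u w v
  rw [hw] at h
  simpa [sesq, eq_comm, Nat.factorial_ne_zero] using h

lemma sesq_single_single (hk : k + m = n) (u : PQForm n k k) (σ₀ τ₀ : Perm (Fin n)) :
    sesq hk u (Pi.single (⇑σ₀ ∘ rightIdx hk) 1) (Pi.single (⇑τ₀ ∘ rightIdx hk) 1) =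
      sgn σ₀ * sgn τ₀ * alt u (⇑σ₀ ∘ leftIdx hk) (⇑τ₀ ∘ leftIdx hk) := by
  have h : sesq hk u (Pi.single (⇑σ₀ ∘ rightIdx hk) 1) (Pi.single (⇑τ₀ ∘ rightIdx hk) 1) =
      ∑ σ : Perm (Fin n), if ⇑σ ∘ rightIdx hk = ⇑σ₀ ∘ rightIdx hk then
        ∑ τ : Perm (Fin n), (if ⇑τ ∘ rightIdx hk = ⇑τ₀ ∘ rightIdx hk then
          sgn σ * sgn τ * u (⇑σ ∘ leftIdx hk) (⇑τ ∘ leftIdx hk) else 0) else 0 := by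
    refine sum_congr rfl fun σ _ => ?_
    split_ifs with hσ
    · refine sum_congr rfl fun τ _ => ?_
      split_ifs with hτ <;> simp [hσ, hτ]
    · simp [Pi.single_apply, hσ]
  rw [h, sum_ite_comp_inr_eq]
  simp only [sum_ite_comp_inr_eq, alt, mul_sum]
  refine sum_congr rfl fun π _ => sum_congr rfl fun π' _ => ?_
  simp only [mul_blockPerm_comp_inl, sgn_mul, sgn_blockPerm, sgn_one]
  push_cast [sgn, comp_assoc]
  ring

lemma alt_eq_of_sesq_eq (hk : k + m = n) {u u' : PQForm n k k}
    (h : ∀ w v, sesq hk u w v = sesq hk u' w v) : alt u = alt u' := by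
  ext I J
  by_cases hI : Injective I
  · by_cases hJ : Injective J
    · obtain ⟨σ₀, hσ₀⟩ := Perm.exists_extending_pair _ _ (leftIdx_injective hk) hI
      obtain ⟨τ₀, hτ₀⟩ := Perm.exists_extending_pair _ _ (leftIdx_injective hk) hJ
      obtain rfl : ⇑σ₀ ∘ leftIdx hk = I := funext hσ₀
      obtain rfl : ⇑τ₀ ∘ leftIdx hk = J := funext hτ₀
      have hs := h (Pi.single (⇑σ₀ ∘ rightIdx hk) 1) (Pi.single (⇑τ₀ ∘ rightIdx hk) 1)
      rw [sesq_single_single, sesq_single_single] at hs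
      exact mul_left_cancel₀ (mul_ne_zero (sgn_ne_zero σ₀) (sgn_ne_zero τ₀)) hs
    · rw [alt_apply_of_not_injective_right u I hJ, alt_apply_of_not_injective_right u' I hJ]
  · rw [alt_apply_of_not_injective_left u hI J, alt_apply_of_not_injective_left u' hI J]

lemma sesq_sum {S : Type*} [Fintype S] (hk : k + m = n) (u : S → PQForm n k k)
    (w v : (Fin m → Fin n) → ℂ) : sesq hk (∑ s, u s) w v = ∑ s, sesq hk (u s) w v := by
  simp only [sesq, Finset.sum_apply, mul_sum, sum_mul]
  exact (sum_congr rfl fun σ _ => sum_comm).trans sum_comm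

noncomputable def sesqMatrix (hk : k + m = n) (u : PQForm n k k) :
    Matrix (Fin m → Fin n) (Fin m → Fin n) ℂ :=
  Matrix.of fun a b => sesq hk u (Pi.single b 1) (Pi.single a 1)

lemma sesq_eq_dotProduct (hk : k + m = n) (u : PQForm n k k) (w v : (Fin m → Fin n) → ℂ) :
    sesq hk u w v = star v ⬝ᵥ sesqMatrix hk u *ᵥ w := by
  simp only [sesq, sesqMatrix, dotProduct, mulVec, of_apply, mul_sum, sum_mul]
  rw [Fintype.sum_comm₄]
  refine sum_congr rfl fun σ _ => sum_congr rfl fun τ _ => ?_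
  simp [Pi.single_apply]
  ring

noncomputable def wedgeCoeff (hk : k + m = n) (c : (Fin k → Fin n) → ℂ)
    (w : (Fin m → Fin n) → ℂ) : ℂ :=
  ∑ σ : Perm (Fin n), sgn σ * c (⇑σ ∘ leftIdx hk) * w (⇑σ ∘ rightIdx hk)

lemma wedgeCoeff_single (hk : k + m = n) (σ₀ : Perm (Fin n)) (w : (Fin m → Fin n) → ℂ) :
    wedgeCoeff hk (Pi.single (⇑σ₀ ∘ leftIdx hk) 1) w = sgn σ₀ * antisymm w (⇑σ₀ ∘ rightIdx hk) := by
  have h : wedgeCoeff hk (Pi.single (⇑σ₀ ∘ leftIdx hk) 1) w = ∑ σ : Perm (Fin n),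
      if ⇑σ ∘ leftIdx hk = ⇑σ₀ ∘ leftIdx hk then sgn σ * w (⇑σ ∘ rightIdx hk) else 0 := by
    refine sum_congr rfl fun σ _ => ?_
    split_ifs with hσ <;> simp [hσ]
  rw [h, sum_ite_comp_inl_eq, antisymm, mul_sum]
  refine sum_congr rfl fun ρ _ => ?_
  rw [mul_blockPerm_comp_inr, sgn_mul, sgn_blockPerm, sgn_one, one_mul, mul_assoc]
  rfl

lemma exists_wedgeCoeff_eq (hk : k + m = n) (f : (Fin m → Fin n) → ℂ) :
    ∃ c : (Fin k → Fin n) → ℂ, ∀ w, wedgeCoeff hk c w = ∑ b, f b * antisymm w b := by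
  have hext : ∀ b : Fin m → Fin n, ∃ σ : Perm (Fin n), Injective b → ⇑σ ∘ rightIdx hk = b := by
    intro b
    by_cases hb : Injective b
    · obtain ⟨σ, hσ⟩ := Perm.exists_extending_pair _ _ (rightIdx_injective hk) hb
      exact ⟨σ, fun _ => funext hσ⟩
    · exact ⟨1, fun h => absurd h hb⟩
  choose σ hσ using hext
  refine ⟨∑ b with Injective b, (f b * sgn (σ b)) • Pi.single (⇑(σ b) ∘ leftIdx hk) 1,
    fun w => ?_⟩
  calc wedgeCoeff hk _ w
      = ∑ b with Injective b,
          f b * sgn (σ b) * wedgeCoeff hk (Pi.single (⇑(σ b) ∘ leftIdx hk) 1) w := by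
        simp only [wedgeCoeff, Finset.sum_apply, Pi.smul_apply, smul_eq_mul, mul_sum, sum_mul]
        exact sum_comm.trans (sum_congr rfl fun b _ => sum_congr rfl fun τ _ => by ring)
    _ = ∑ b with Injective b, f b * antisymm w b := sum_congr rfl fun b hb => by
        rw [wedgeCoeff_single, hσ b (mem_filter.mp hb).2, ← mul_assoc, mul_assoc (f b),
          sgn_mul_self, mul_one]
    _ = ∑ b, f b * antisymm w b := sum_filter_of_ne fun b _ hb => by
        contrapose! hb
        rw [antisymm_apply_of_not_injective w hb, mul_zero]

def sqForm (α : PQForm n k 0) : PQForm n k k :=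
  castD (Nat.add_zero k) (Nat.zero_add k) ((Complex.I ^ (k ^ 2)) • (α.wedge (conjForm α)))

lemma sqForm_apply (α : PQForm n k 0) (I J : Fin k → Fin n) :
    sqForm α I J = Complex.I ^ (k ^ 2) * (α I Fin.elim0 * starRingEnd ℂ (α J Fin.elim0)) := by
  have hJ : (fun j => J (Fin.cast (Nat.zero_add k) (Fin.natAdd 0 j))) = J :=
    funext fun j => congrArg J (Fin.ext (by simp))
  simp only [sqForm, castD, wedge, conjForm, Pi.smul_apply, smul_eq_mul, mul_zero, pow_zero,
    one_mul, hJ]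
  congr <;> exact Subsingleton.elim _ _

lemma sesq_sqForm (hk : k + m = n) (α : PQForm n k 0) (w v : (Fin m → Fin n) → ℂ) :
    sesq hk (sqForm α) w v = Complex.I ^ (k ^ 2) *
      (wedgeCoeff hk (fun I => α I Fin.elim0) w *
        starRingEnd ℂ (wedgeCoeff hk (fun I => α I Fin.elim0) v)) := by
  simp only [sesq, wedgeCoeff, sqForm_apply, map_sum, map_mul, conj_sgn]
  rw [sum_mul_sum, mul_sum]
  refine sum_congr rfl fun σ _ => ?_
  rw [mul_sum]
  refine sum_congr rfl fun τ _ => ?_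
  ring

lemma pairing_apply_perm (h : k ≤ n) (hk : k + (n - k) = n) (u : PQForm n k k)
    (β : PQForm n (n - k) 0) (σ τ : Perm (Fin n)) :
    pairing h u β (id ∘ ⇑σ) (id ∘ ⇑τ) = Complex.I ^ ((n - k) ^ 2) * ((-1) ^ (k * (n - k)) *
      (u (⇑σ ∘ leftIdx hk) (⇑τ ∘ leftIdx hk) * β (⇑σ ∘ rightIdx hk) Fin.elim0) *
        starRingEnd ℂ (β (⇑τ ∘ rightIdx hk) Fin.elim0)) := by
  simp only [pairing, castD, wedge, conjForm, Pi.smul_apply, smul_eq_mul, Function.comp_apply,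
    id_eq, mul_zero, pow_zero, one_mul]
  -- what is left compares maps out of `Fin 0`
  congr <;> exact Subsingleton.elim _ _

lemma volCoeff_pairing (h : k ≤ n) (hk : k + (n - k) = n) (u : PQForm n k k)
    (β : PQForm n (n - k) 0) :
    volCoeff (pairing h u β) = Complex.I ^ ((n - k) ^ 2) * (-1) ^ (k * (n - k)) *
      sesq hk u (fun J => β J Fin.elim0) (fun J => β J Fin.elim0) := by
  simp only [volCoeff, alt, pairing_apply_perm h hk, sesq, mul_sum]
  refine sum_congr rfl fun σ _ => sum_congr rfl fun τ _ => ?_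
  push_cast [sgn]
  ring

lemma I_pow_add_sq (k m : ℕ) :
    Complex.I ^ ((k + m) ^ 2) = Complex.I ^ (m ^ 2) * (-1) ^ (k * m) * Complex.I ^ (k ^ 2) := by
  rw [← Complex.I_sq, ← pow_mul, ← pow_add, ← pow_add]
  ring_nf

lemma isNonnegVol_pairing_iff (h : k ≤ n) (hk : k + (n - k) = n) (u : PQForm n k k)
    (β : PQForm n (n - k) 0) :
    IsNonnegVol (pairing h u β) ↔ ∃ t : ℝ, 0 ≤ t ∧
      sesq hk u (fun J => β J Fin.elim0) (fun J => β J Fin.elim0) = t * Complex.I ^ (k ^ 2) := by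
  have hc : Complex.I ^ ((n - k) ^ 2) * (-1) ^ (k * (n - k)) ≠ 0 := by simp
  have hn : Complex.I ^ (n ^ 2) =
      Complex.I ^ ((n - k) ^ 2) * (-1) ^ (k * (n - k)) * Complex.I ^ (k ^ 2) := by
    rw [← I_pow_add_sq, hk]
  refine exists_congr fun t => and_congr_right fun _ => ?_
  rw [volCoeff_pairing, hn, mul_left_comm (t : ℂ), mul_right_inj' hc]

open scoped ComplexOrder in
lemma exists_sesq_eq_sum_sq (hk : k + m = n) (u : PQForm n k k)
    (hu : ∀ w, ∃ t : ℝ, 0 ≤ t ∧ sesq hk u w w = t * Complex.I ^ (k ^ 2)) :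
    ∃ c : (Fin m → Fin n) → (Fin k → Fin n) → ℂ, ∀ w v, sesq hk u w v =
      Complex.I ^ (k ^ 2) * ∑ s, wedgeCoeff hk (c s) w * starRingEnd ℂ (wedgeCoeff hk (c s) v) := by
  have hI : Complex.I ^ (k ^ 2) ≠ 0 := by simp
  set H := (Complex.I ^ (k ^ 2))⁻¹ • sesqMatrix hk u with hH_def
  have hsesq : ∀ w v, sesq hk u w v = Complex.I ^ (k ^ 2) * (star v ⬝ᵥ H *ᵥ w) := by
    intro w v
    rw [hH_def, smul_mulVec, dotProduct_smul, smul_eq_mul, mul_inv_cancel_left₀ hI,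
      sesq_eq_dotProduct]
  have hH : ∀ x, 0 ≤ star x ⬝ᵥ H *ᵥ x := by
    intro x
    obtain ⟨t, ht, hx⟩ := hu x
    rw [hsesq, mul_comm] at hx
    rw [mul_right_cancel₀ hI hx]
    exact_mod_cast ht
  obtain ⟨B, hB⟩ :=
    (posSemidef_of_forall_dotProduct_mulVec_nonneg hH).exists_eq_conjTranspose_mul_self
  have hBsesq : ∀ w v, sesq hk u w v = Complex.I ^ (k ^ 2) * (star (B *ᵥ v) ⬝ᵥ B *ᵥ w) := by
    intro w v
    rw [hsesq, hB, ← mulVec_mulVec, dotProduct_mulVec, ← star_mulVec]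
  have hker : ∀ w, antisymm w = 0 → B *ᵥ w = 0 := by
    intro w hw
    have h0 := sesq_eq_zero_of_antisymm_eq_zero hk u hw w
    rwa [hBsesq, mul_eq_zero, or_iff_right hI, dotProduct_star_self_eq_zero] at h0
  have hBw : ∀ w, B *ᵥ w = (m.factorial : ℂ)⁻¹ • B *ᵥ antisymm w := by
    intro w
    have h := hker _ (by rw [antisymm_sub_smul, antisymm_antisymm, sub_self] :
      antisymm (antisymm w - (m.factorial : ℂ) • w) = 0)
    rw [mulVec_sub, mulVec_smul, sub_eq_zero] at h
    rw [h, smul_smul, inv_mul_cancel₀ (by positivity), one_smul]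
  choose c hc using fun s => exists_wedgeCoeff_eq hk fun b => (m.factorial : ℂ)⁻¹ * B s b
  have hcB : ∀ s w, wedgeCoeff hk (c s) w = (B *ᵥ w) s := by
    intro s w
    rw [hc, hBw, Pi.smul_apply, smul_eq_mul, mulVec, dotProduct, mul_sum]
    simp only [mul_assoc]
  refine ⟨c, fun w v => ?_⟩
  rw [hBsesq, dotProduct]
  simp only [hcB, Pi.star_apply, Complex.star_def, mul_comm]

end PQForm

theorem isNonnegForm_iff_sum_squares_general {n k : ℕ} (h : k ≤ n) (u : PQForm n k k) :
    PQForm.IsNonnegForm h u ↔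
      ∃ (N : ℕ) (α : Fin N → PQForm n k 0),
        PQForm.alt u = PQForm.alt (∑ s, PQForm.castD (Nat.add_zero k) (Nat.zero_add k)
          ((Complex.I ^ (k ^ 2)) • ((α s).wedge (PQForm.conjForm (α s))))) := by
  have hk : k + (n - k) = n := Nat.add_sub_cancel' h
  change _ ↔ ∃ (N : ℕ) (α : Fin N → PQForm n k 0), u.alt = (∑ s, (α s).sqForm).alt
  constructor
  · intro hu
    obtain ⟨c, hc⟩ := PQForm.exists_sesq_eq_sum_sq hk u fun w =>
      (PQForm.isNonnegVol_pairing_iff h hk u fun J _ => w J).1 (hu _)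
    let e := (Fintype.equivFin (Fin (n - k) → Fin n)).symm
    refine ⟨_, fun s I _ => c (e s) I, PQForm.alt_eq_of_sesq_eq hk fun w v => ?_⟩
    rw [PQForm.sesq_sum, hc, mul_sum, ← e.sum_comp]
    refine sum_congr rfl fun s _ => ?_
    rw [PQForm.sesq_sqForm]
  · rintro ⟨N, α, hα⟩ β
    rw [PQForm.isNonnegVol_pairing_iff h hk, PQForm.sesq_eq_of_alt_eq _ hα, PQForm.sesq_sum]
    refine ⟨∑ s, Complex.normSq (PQForm.wedgeCoeff hk (fun I => α s I Fin.elim0)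
      fun J => β J Fin.elim0), sum_nonneg fun s _ => Complex.normSq_nonneg _, ?_⟩
    simp only [PQForm.sesq_sqForm, Complex.mul_conj, ← mul_sum]
    push_cast
    ring

/-- a real `(k,k)`-form `u` on `ℂⁿ` is non-negative iff it can be written
(as a form) as `u = ∑_{s=1}^N (√-1)^{k²} α_s ∧ ᾱ_s` for some `(k,0)`-forms `α_s`. -/
theorem isNonnegForm_iff_sum_squares {n k : ℕ} (h : k ≤ n) (u : PQForm n k k)
    (hreal : PQForm.IsRealForm u) :
    PQForm.IsNonnegForm h u ↔
      ∃ (N : ℕ) (α : Fin N → PQForm n k 0),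
        PQForm.alt u = PQForm.alt (∑ s, PQForm.castD (Nat.add_zero k) (Nat.zero_add k)
          ((Complex.I ^ (k ^ 2)) • ((α s).wedge (PQForm.conjForm (α s))))) :=
  isNonnegForm_iff_sum_squares_general h u
end

section
/- A Hermitian holomorphic vector bundle (E,h^E) is decomposably non-negative if and only if at every point its Chern curvature matrix with respect to a unitary frame has the form R = −B ∧ B̄ᵀ + A ∧ Āᵀ, where A is an r×N matrix of (1,0)-forms and B is an r×N matrix of (0,1)-forms. -/
open Finset

/-- Pointwise model of the Chern curvature of a rank-`r` Hermitian bundle over an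
`n`-dimensional complex manifold, in a unitary frame: `R i j α β` is the coefficient
`R_{i j̄ α β̄}`. -/
abbrev CurvTensor (n r : ℕ) : Type := Fin r → Fin r → Fin n → Fin n → ℂ

/-- Hermitian symmetry `R_{i j̄ α β̄} = conj (R_{j ī β ᾱ})`. -/
def IsHermitianCurv {n r : ℕ} (R : CurvTensor n r) : Prop :=
  ∀ i j α β, R i j α β = (starRingEnd ℂ) (R j i β α)

/-- The Nakano quadratic form `R_{i j̄ α β̄} u^{iα} conj (u^{jβ})`. -/
noncomputable def nakanoQ {n r : ℕ} (R : CurvTensor n r) (u : Fin r → Fin n → ℂ) : ℂ :=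
  ∑ i, ∑ j, ∑ α, ∑ β, R i j α β * u i α * (starRingEnd ℂ) (u j β)

/-- The dual Nakano quadratic form `R_{i j̄ α β̄} v^{j̄α} conj (v^{īβ})`. -/
noncomputable def dualNakanoQ {n r : ℕ} (R : CurvTensor n r) (v : Fin r → Fin n → ℂ) : ℂ :=
  ∑ i, ∑ j, ∑ α, ∑ β, R i j α β * v j α * (starRingEnd ℂ) (v i β)

/-- The dual Nakano quadratic form in the type-II convention:
`R_{i j̄ α β̄} v^{i β̄} conj (v^{j ᾱ})`. -/
noncomputable def dualNakanoQ' {n r : ℕ} (R : CurvTensor n r) (v : Fin r → Fin n → ℂ) : ℂ :=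
  ∑ i, ∑ j, ∑ α, ∑ β, R i j α β * v i β * (starRingEnd ℂ) (v j α)

/-- The cross curvature term `R_{i j̄ α β̄} u^{iα} conj (v'^{jβ})`. -/
noncomputable def crossQ {n r : ℕ} (R : CurvTensor n r) (u v' : Fin r → Fin n → ℂ) : ℂ :=
  ∑ i, ∑ j, ∑ α, ∑ β, R i j α β * u i α * (starRingEnd ℂ) (v' j β)

/-- The Griffiths quadratic form `⟨R(v,v̄)ξ,ξ⟩ = R_{i j̄ α β̄} ξ^i conj(ξ^j) v^α conj(v^β)`. -/
noncomputable def griffithsQ {n r : ℕ} (R : CurvTensor n r) (v : Fin n → ℂ)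
    (ξ : Fin r → ℂ) : ℂ :=
  ∑ i, ∑ j, ∑ α, ∑ β, R i j α β * ξ i * (starRingEnd ℂ) (ξ j) * v α * (starRingEnd ℂ) (v β)

/-- The curvature has the form `R = −B∧B̄ᵀ + A∧Āᵀ` in a unitary frame, written on
coefficients: `R_{i j̄ α β̄} = ∑_p A_{jpα} conj(A_{ipβ}) + ∑_p B_{jpβ̄} conj(B_{ipᾱ})`,
where `A` is an `r×N` matrix of `(1,0)`-forms (coefficients `A i p α`) and `B` is an
`r×N` matrix of `(0,1)`-forms (coefficients `B i p α` of `dz̄^α`). -/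
def HasDecomp {n r N : ℕ} (R : CurvTensor n r) (A B : Fin r → Fin N → Fin n → ℂ) : Prop :=
  ∀ i j α β, R i j α β =
    (∑ p, A j p α * (starRingEnd ℂ) (A i p β)) + (∑ p, B j p β * (starRingEnd ℂ) (B i p α))

/-- The `N × (r·n)` coefficient matrix `𝐁 = (B_{i p ᾱ})_{p, (i,α)}` of a matrix of forms. -/
def coeffMat {n r N : ℕ} (B : Fin r → Fin N → Fin n → ℂ) : Matrix (Fin N) (Fin r × Fin n) ℂ :=
  Matrix.of fun p q => B q.1 p q.2

/-- The span of the `(1,0)`-covectors `{A_{ip}}` appearing in `A`. -/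
noncomputable def covSpanA {n r N : ℕ} (A : Fin r → Fin N → Fin n → ℂ) : Submodule ℂ (Fin n → ℂ) :=
  Submodule.span ℂ {x | ∃ i p, x = fun α => A i p α}

/-- The span of the `(1,0)`-covectors `{conj B_{ip}}` obtained by conjugating the
`(0,1)`-forms appearing in `B`. -/
noncomputable def covSpanBbar {n r N : ℕ} (B : Fin r → Fin N → Fin n → ℂ) : Submodule ℂ (Fin n → ℂ) :=
  Submodule.span ℂ {x | ∃ i p, x = fun α => (starRingEnd ℂ) (B i p α)}

/-- Strongly decomposable curvature condition of type I at a point, with the sign of the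
quadratic forms prescribed by the predicate `P` (`0 < ·` : positive, `0 ≤ ·` : non-negative,
`· < 0` : negative, `· ≤ 0` : non-positive): there is a decomposition
`T_x^{1,0}X = U ⊕ V` such that the curvature is Nakano `P`-definite on `E⊗U`, dual Nakano
`P`-definite on `Ē⊗V`, and the cross curvature terms vanish. -/
def TypeIAt {n r : ℕ} (P : ℝ → Prop) (R : CurvTensor n r) : Prop :=
  ∃ U V : Submodule ℂ (Fin n → ℂ), IsCompl U V ∧
    (∀ u : Fin r → Fin n → ℂ, (∀ i, u i ∈ U) → u ≠ 0 →
      ∃ c : ℝ, P c ∧ nakanoQ R u = (c : ℂ)) ∧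
    (∀ u v' : Fin r → Fin n → ℂ, (∀ i, u i ∈ U) → (∀ j, v' j ∈ V) → crossQ R u v' = 0) ∧
    (∀ v : Fin r → Fin n → ℂ, (∀ j, v j ∈ V) → v ≠ 0 →
      ∃ c : ℝ, P c ∧ dualNakanoQ R v = (c : ℂ))

/-- Strongly decomposable curvature condition of type II at a point, with the sign of the
quadratic forms prescribed by the predicate `P`: there is an orthogonal decomposition
`E_x = E₁ ⊕ E₂` making the curvature block diagonal, with the curvature Nakano
`P`-definite on `E₁ ⊗ T^{1,0}` and dual Nakano `P`-definite on `E₂ ⊗ T^{0,1}`. -/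
def TypeIIAt {n r : ℕ} (P : ℝ → Prop) (R : CurvTensor n r) : Prop :=
  ∃ E1 E2 : Submodule ℂ (Fin r → ℂ), IsCompl E1 E2 ∧
    (∀ ξ ∈ E1, ∀ η ∈ E2, (∑ i, ξ i * (starRingEnd ℂ) (η i)) = 0) ∧
    (∀ ξ ∈ E1, ∀ η ∈ E2, ∀ α β,
      (∑ i, ∑ j, R i j α β * ξ i * (starRingEnd ℂ) (η j)) = 0 ∧
      (∑ i, ∑ j, R i j α β * η i * (starRingEnd ℂ) (ξ j)) = 0) ∧
    (∀ u : Fin r → Fin n → ℂ, (∀ α, (fun i => u i α) ∈ E1) → u ≠ 0 →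
      ∃ c : ℝ, P c ∧ nakanoQ R u = (c : ℂ)) ∧
    (∀ v : Fin r → Fin n → ℂ, (∀ β, (fun i => v i β) ∈ E2) → v ≠ 0 →
      ∃ c : ℝ, P c ∧ dualNakanoQ' R v = (c : ℂ))

/-- Decomposable non-negativity at a point (Finski): `(1/2π)⟨R(v,v̄)ξ,ξ⟩` is a finite sum
of squared moduli of sesquilinear forms `l_p` and linear forms `l'_p` in `(v,ξ)`. -/
def DecomposablyNonnegAt {n r : ℕ} (R : CurvTensor n r) : Prop :=
  ∃ (N : ℕ) (l l' : Fin N → Fin n → Fin r → ℂ),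
    ∀ (v : Fin n → ℂ) (ξ : Fin r → ℂ),
      (1 / (2 * (Real.pi : ℂ))) * griffithsQ R v ξ =
        (((∑ p, Complex.normSq (∑ α, ∑ i, l p α i * v α * (starRingEnd ℂ) (ξ i)))
          + ∑ p, Complex.normSq (∑ α, ∑ i, l' p α i * v α * ξ i) : ℝ) : ℂ)

/-- Decomposable positivity at a point: decomposable non-negativity together with the
non-vanishing of `⟨R(v,v̄)ξ,ξ⟩` for `v, ξ ≠ 0`. -/
def DecomposablyPosAt {n r : ℕ} (R : CurvTensor n r) : Prop :=
  DecomposablyNonnegAt R ∧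
    ∀ (v : Fin n → ℂ) (ξ : Fin r → ℂ), v ≠ 0 → ξ ≠ 0 → griffithsQ R v ξ ≠ 0

open ComplexConjugate Real

/-! A curvature tensor is determined by its Griffiths form `⟨R(v,v̄)ξ,ξ⟩`: polarize in `ξ`,
then in `v`. A tensor of the shape `−B∧B̄ᵀ + A∧Āᵀ` has Griffiths form
`∑ₚ |Aₚ(v, ξ̄)|² + ∑ₚ |B̄ₚ(v, ξ)|²`, so a sum-of-squares representation of `⟨R(v,v̄)ξ,ξ⟩`
is the same thing as such a decomposition of `R`; the factor `1/2π` is absorbed by scaling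
all forms by `√(2π)`. -/

theorem Matrix.eq_zero_of_forall_sum_mul_conj_eq_zero {ι : Type*} [Fintype ι]
    (M : Matrix ι ι ℂ) (h : ∀ v : ι → ℂ, ∑ a, ∑ b, M a b * v a * conj (v b) = 0) : M = 0 := by
  classical
  rw [← conjTranspose_eq_zero, ← map_eq_zero_iff _ toEuclideanLin.injective,
    ← inner_map_self_eq_zero]
  intro x
  rw [← h (star x.ofLp), sum_comm]
  simp [EuclideanSpace.inner_eq_star_dotProduct, dotProduct, mulVec, mul_sum, mul_comm]

theorem sum_mul_conj_sum {ι κ P : Type*} [Fintype ι] [Fintype κ] [Fintype P]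
    (F : P → κ → ι → ℂ) :
    ∑ i, ∑ j, ∑ α, ∑ β, ∑ p, F p α j * conj (F p β i) =
      ((∑ p, Complex.normSq (∑ α, ∑ i, F p α i) : ℝ) : ℂ) := by
  push_cast [← Complex.mul_conj]
  simp_rw [sum_comm (t := (univ : Finset P))]
  simp only [← mul_sum, ← sum_mul, ← map_sum]
  exact sum_congr rfl fun p _ => by rw [sum_comm]

section Curvature

variable {n r : ℕ}

theorem griffithsQ_eq_sum_sum (R : CurvTensor n r) (v : Fin n → ℂ) (ξ : Fin r → ℂ) :
    griffithsQ R v ξ =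
      ∑ i, ∑ j, (∑ α, ∑ β, R i j α β * v α * conj (v β)) * ξ i * conj (ξ j) := by
  simp only [griffithsQ, sum_mul]
  exact sum_congr rfl fun i _ => sum_congr rfl fun j _ => sum_congr rfl fun α _ =>
    sum_congr rfl fun β _ => by ring

theorem griffithsQ_sub (R R' : CurvTensor n r) (v : Fin n → ℂ) (ξ : Fin r → ℂ) :
    griffithsQ (R - R') v ξ = griffithsQ R v ξ - griffithsQ R' v ξ := by
  simp only [griffithsQ, Pi.sub_apply, sub_mul, sum_sub_distrib]

theorem eq_zero_of_griffithsQ_eq_zero {R : CurvTensor n r}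
    (h : ∀ v ξ, griffithsQ R v ξ = 0) : R = 0 := by
  have hvec : ∀ v : Fin n → ℂ,
      (Matrix.of fun i j => ∑ α, ∑ β, R i j α β * v α * conj (v β)) = 0 := fun v =>
    Matrix.eq_zero_of_forall_sum_mul_conj_eq_zero _ fun ξ => by
      simpa [griffithsQ_eq_sum_sum] using h v ξ
  funext i j
  exact Matrix.eq_zero_of_forall_sum_mul_conj_eq_zero (R i j) fun v =>
    congrFun (congrFun (hvec v) i) j

theorem eq_of_griffithsQ_eq {R R' : CurvTensor n r}
    (h : ∀ v ξ, griffithsQ R v ξ = griffithsQ R' v ξ) : R = R' :=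
  sub_eq_zero.mp <| eq_zero_of_griffithsQ_eq_zero fun v ξ => by
    rw [griffithsQ_sub, h, sub_self]

variable {N : ℕ}

noncomputable def sosForm (l l' : Fin N → Fin n → Fin r → ℂ) (v : Fin n → ℂ) (ξ : Fin r → ℂ) :
    ℝ :=
  ∑ p, Complex.normSq (∑ α, ∑ i, l p α i * v α * conj (ξ i)) +
    ∑ p, Complex.normSq (∑ α, ∑ i, l' p α i * v α * ξ i)

def sosCurv (l l' : Fin N → Fin n → Fin r → ℂ) : CurvTensor n r :=
  fun i j α β => ∑ p, l p α j * conj (l p β i) + ∑ p, conj (l' p β j) * l' p α i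

theorem sosForm_smul (c : ℝ) (l l' : Fin N → Fin n → Fin r → ℂ) (v : Fin n → ℂ)
    (ξ : Fin r → ℂ) : sosForm (c • l) (c • l') v ξ = c ^ 2 * sosForm l l' v ξ := by
  simp only [sosForm, Pi.smul_apply, Complex.real_smul, mul_assoc, ← mul_sum,
    Complex.normSq_mul, Complex.normSq_ofReal, mul_add]
  ring

theorem griffithsQ_sosCurv (l l' : Fin N → Fin n → Fin r → ℂ) (v : Fin n → ℂ) (ξ : Fin r → ℂ) :
    griffithsQ (sosCurv l l') v ξ = sosForm l l' v ξ := by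
  rw [sosForm, Complex.ofReal_add, ← sum_mul_conj_sum (fun p α i => l p α i * v α * conj (ξ i)),
    ← sum_mul_conj_sum (fun p α i => l' p α i * v α * ξ i)]
  simp only [griffithsQ, sosCurv, add_mul, sum_add_distrib, sum_mul]
  refine congrArg₂ (· + ·) ?_ (sum_comm.trans ?_)
  all_goals
    refine sum_congr rfl fun _ _ => sum_congr rfl fun _ _ => sum_congr rfl fun _ _ =>
      sum_congr rfl fun _ _ => sum_congr rfl fun _ _ => ?_
    simp only [map_mul, Complex.conj_conj]
    ring

theorem griffithsQ_eq_sosForm_iff (R : CurvTensor n r) (l l' : Fin N → Fin n → Fin r → ℂ) :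
    (∀ v ξ, griffithsQ R v ξ = sosForm l l' v ξ) ↔ R = sosCurv l l' := by
  simp only [← griffithsQ_sosCurv]
  exact ⟨eq_of_griffithsQ_eq, fun h _ _ => h ▸ rfl⟩

theorem hasDecomp_iff_eq_sosCurv (R : CurvTensor n r) (A B : Fin r → Fin N → Fin n → ℂ) :
    HasDecomp R A B ↔ R = sosCurv (fun p α i => A i p α) (fun p α i => conj (B i p α)) := by
  simp only [HasDecomp, sosCurv, Complex.conj_conj, funext_iff]

theorem decomposablyNonnegAt_iff_exists_griffithsQ_eq_sosForm (R : CurvTensor n r) :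
    DecomposablyNonnegAt R ↔ ∃ (N : ℕ) (l l' : Fin N → Fin n → Fin r → ℂ),
      ∀ v ξ, griffithsQ R v ξ = sosForm l l' v ξ := by
  have hc : √(2 * π) ^ 2 = 2 * π := Real.sq_sqrt (by positivity)
  constructor
  · rintro ⟨N, l, l', h⟩
    refine ⟨N, √(2 * π) • l, √(2 * π) • l', fun v ξ => ?_⟩
    rw [sosForm_smul, hc]
    push_cast
    rw [show (sosForm l l' v ξ : ℂ) = 1 / (2 * π) * griffithsQ R v ξ from (h v ξ).symm]
    field_simp
  · rintro ⟨N, l, l', h⟩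
    refine ⟨N, (√(2 * π))⁻¹ • l, (√(2 * π))⁻¹ • l', fun v ξ => ?_⟩
    show _ = (sosForm _ _ v ξ : ℂ)
    rw [sosForm_smul, inv_pow, hc, h v ξ]
    push_cast
    field_simp

end Curvature

theorem decomposablyNonneg_iff_hasDecomp_general {n r : ℕ} {X : Type*}
    (R : X → CurvTensor n r) :
    (∀ x, DecomposablyNonnegAt (R x)) ↔
      (∀ x, ∃ (N : ℕ) (A B : Fin r → Fin N → Fin n → ℂ), HasDecomp (R x) A B) := by
  refine forall_congr' fun x => ?_
  simp only [decomposablyNonnegAt_iff_exists_griffithsQ_eq_sosForm, griffithsQ_eq_sosForm_iff,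
    hasDecomp_iff_eq_sosCurv]
  refine exists_congr fun N => ⟨fun ⟨l, l', h⟩ => ?_, fun ⟨A, B, h⟩ => ⟨_, _, h⟩⟩
  exact ⟨fun i p α => l p α i, fun i p α => conj (l' p α i), by simpa using h⟩

/-- a Hermitian holomorphic vector bundle (modelled by
its family of pointwise curvature tensors in unitary frames) is decomposably non-negative
iff at every point the Chern curvature matrix has the form `R = −B∧B̄ᵀ + A∧Āᵀ` with `A`
an `r×N` matrix of `(1,0)`-forms and `B` an `r×N` matrix of `(0,1)`-forms. -/
theorem decomposablyNonneg_iff_hasDecomp {n r : ℕ} {X : Type*}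
    (R : X → CurvTensor n r) (hH : ∀ x, IsHermitianCurv (R x)) :
    (∀ x, DecomposablyNonnegAt (R x)) ↔
      (∀ x, ∃ (N : ℕ) (A B : Fin r → Fin N → Fin n → ℂ), HasDecomp (R x) A B) :=
  decomposablyNonneg_iff_hasDecomp_general R
end

section
/- Pointwise linear-algebra version of the Nakano criterion: a Hermitian r×r matrix of (1,1)-forms R (representing curvature at a point in a unitary frame) satisfies R_{ij̄αβ̄} u^{iα} ū^{jβ} ≥ 0 for all u ∈ ℂ^r ⊗ ℂ^n if and only if R = −B ∧ B̄ᵀ for some r×N matrix B of (0,1)-forms; moreover the positivity is strict (positive for all u ≠ 0) if and only if the N × rn matrix 𝐁 = (B_{ip ᾱ}) formed from the coefficients of B has rank rn. -/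
open Finset

/-!
Flattening the index pairs `(i, α)` turns the Nakano form of `u` into the Hermitian form of the
`rn × rn` matrix `M_{(i,α),(j,β)} = R_{i j̄ α β̄}` evaluated at `conj u`, and turns a
decomposition `R = −B∧B̄ᵀ` into a factorization `M = 𝐁ᴴ 𝐁`. Nakano non-negativity is thus positive
semidefiniteness of `M`, i.e. `M` being a Gram matrix `𝐁ᴴ 𝐁`; Nakano positivity is positive
definiteness, and `𝐁ᴴ 𝐁` is definite exactly when `𝐁` is injective, i.e. has rank `rn`.
-/

open Matrix ComplexOrder

namespace Matrix

variable {m ι 𝕜 : Type*} [Fintype ι] [RCLike 𝕜]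

theorem posSemidef_iff_exists_conjTranspose_mul_self {M : Matrix ι ι 𝕜} :
    M.PosSemidef ↔ ∃ (N : ℕ) (C : Matrix (Fin N) ι 𝕜), M = Cᴴ * C := by
  refine ⟨fun hM => ?_, fun ⟨N, C, hC⟩ => hC ▸ posSemidef_conjTranspose_mul_self C⟩
  classical
  open MatrixOrder in obtain ⟨C, hC⟩ := CStarAlgebra.nonneg_iff_eq_star_mul_self.mp hM.nonneg
  refine ⟨Fintype.card ι, C.submatrix (Fintype.equivFin ι).symm id, ?_⟩
  rw [conjTranspose_submatrix, submatrix_mul_equiv, submatrix_id_id, hC, star_eq_conjTranspose]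

theorem mulVec_injective_of_rank_eq_card {C : Matrix m ι 𝕜} (h : C.rank = Fintype.card ι) :
    Function.Injective C.mulVec := by
  have hdim := LinearMap.finrank_range_add_finrank_ker C.mulVecLin
  rw [Module.finrank_fintype_fun_eq_card, ← rank, h] at hdim
  have hker : LinearMap.ker C.mulVecLin = ⊥ := Submodule.finrank_eq_zero.mp (by omega)
  rw [← coe_mulVecLin]
  exact LinearMap.ker_eq_bot.mp hker

theorem posDef_conjTranspose_mul_self_iff_rank_eq [Fintype m] {C : Matrix m ι 𝕜} :
    (Cᴴ * C).PosDef ↔ C.rank = Fintype.card ι := by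
  classical
  refine ⟨fun h => ?_, fun h =>
    PosDef.conjTranspose_mul_self C (mulVec_injective_of_rank_eq_card h)⟩
  rw [← rank_conjTranspose_mul_self, rank_of_isUnit _ h.isUnit]

end Matrix

variable {n r : ℕ}

def nakanoMat (R : CurvTensor n r) : Matrix (Fin r × Fin n) (Fin r × Fin n) ℂ :=
  Matrix.of fun q q' => R q.1 q'.1 q.2 q'.2

theorem nakanoMat_isHermitian {R : CurvTensor n r} (hH : IsHermitianCurv R) :
    (nakanoMat R).IsHermitian := by
  ext q q'
  simp only [conjTranspose_apply, nakanoMat, of_apply, Complex.star_def]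
  exact (hH q.1 q'.1 q.2 q'.2).symm

theorem nakanoQ_curry_star (R : CurvTensor n r) (x : Fin r × Fin n → ℂ) :
    nakanoQ R (Function.curry (star x)) = star x ⬝ᵥ nakanoMat R *ᵥ x := by
  simp only [nakanoQ, dotProduct, mulVec, nakanoMat, of_apply, Fintype.sum_prod_type,
    Function.curry_apply, Pi.star_apply, Complex.star_def, Complex.conj_conj, mul_sum]
  refine sum_congr rfl fun i _ => ?_
  rw [sum_comm]
  exact sum_congr rfl fun α _ => sum_congr rfl fun j _ =>
    sum_congr rfl fun β _ => by ring

theorem forall_curry_star {p : (Fin r → Fin n → ℂ) → Prop} :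
    (∀ u, p u) ↔ ∀ x : Fin r × Fin n → ℂ, p (Function.curry (star x)) :=
  ((Equiv.curry _ _ _).surjective.comp star_involutive.surjective).forall

theorem curry_star_eq_zero_iff {x : Fin r × Fin n → ℂ} :
    Function.curry (star x) = 0 ↔ x = 0 := by
  simp only [funext_iff, Function.curry_apply, Pi.star_apply, Pi.zero_apply, star_eq_zero,
    Prod.forall]

theorem forall_nakanoQ_nonneg_iff_posSemidef {R : CurvTensor n r} (hH : IsHermitianCurv R) :
    (∀ u, ∃ c : ℝ, 0 ≤ c ∧ nakanoQ R u = c) ↔ (nakanoMat R).PosSemidef := by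
  rw [posSemidef_iff_dotProduct_mulVec, forall_curry_star,
    and_iff_right (nakanoMat_isHermitian hH)]
  refine forall_congr' fun x => ?_
  rw [nakanoQ_curry_star, RCLike.nonneg_iff_exists_ofReal]
  exact exists_congr fun c => and_congr ge_iff_le eq_comm

theorem forall_nakanoQ_pos_iff_posDef {R : CurvTensor n r} (hH : IsHermitianCurv R) :
    (∀ u, u ≠ 0 → ∃ c : ℝ, 0 < c ∧ nakanoQ R u = c) ↔ (nakanoMat R).PosDef := by
  rw [posDef_iff_dotProduct_mulVec, forall_curry_star,
    and_iff_right (nakanoMat_isHermitian hH)]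
  refine forall_congr' fun x => ?_
  rw [nakanoQ_curry_star, ne_eq, curry_star_eq_zero_iff, ← ne_eq, RCLike.pos_iff_exists_ofReal]
  exact imp_congr_right fun _ => exists_congr fun c => and_congr gt_iff_lt eq_comm

theorem coeffMat_surjective {N : ℕ} :
    Function.Surjective (coeffMat : (Fin r → Fin N → Fin n → ℂ) → _) :=
  fun C => ⟨fun i p α => C p (i, α), rfl⟩

theorem nakanoMat_eq_conjTranspose_mul_self_iff {N : ℕ} {R : CurvTensor n r}
    {B : Fin r → Fin N → Fin n → ℂ} :
    nakanoMat R = (coeffMat B)ᴴ * coeffMat B ↔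
      ∀ i j α β, R i j α β = ∑ p, B j p β * (starRingEnd ℂ) (B i p α) := by
  simp only [← Matrix.ext_iff, Prod.forall, nakanoMat, coeffMat, of_apply, mul_apply,
    conjTranspose_apply, Complex.star_def, mul_comm ((starRingEnd ℂ) _)]
  exact ⟨fun h i j α β => h i α j β, fun h i α j β => h i j α β⟩

/-- pointwise Nakano criterion: a Hermitian `r×r` matrix of `(1,1)`-forms
`R` is Nakano non-negative iff `R = −B∧B̄ᵀ` for some `r×N` matrix `B` of `(0,1)`-forms
(on coefficients: `R_{i j̄ α β̄} = ∑_p B_{jpβ̄} conj(B_{ipᾱ})`); and `R` is Nakano positive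
iff moreover the `N × rn` coefficient matrix `𝐁` can be chosen with rank `r·n`. -/
theorem nakano_criterion {n r : ℕ} (R : CurvTensor n r) (hH : IsHermitianCurv R) :
    ((∀ u : Fin r → Fin n → ℂ, ∃ c : ℝ, 0 ≤ c ∧ nakanoQ R u = (c : ℂ)) ↔
      ∃ (N : ℕ) (B : Fin r → Fin N → Fin n → ℂ),
        ∀ i j α β, R i j α β = ∑ p, B j p β * (starRingEnd ℂ) (B i p α)) ∧
    ((∀ u : Fin r → Fin n → ℂ, u ≠ 0 → ∃ c : ℝ, 0 < c ∧ nakanoQ R u = (c : ℂ)) ↔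
      ∃ (N : ℕ) (B : Fin r → Fin N → Fin n → ℂ),
        (∀ i j α β, R i j α β = ∑ p, B j p β * (starRingEnd ℂ) (B i p α)) ∧
        Matrix.rank (coeffMat B) = r * n) := by
  refine ⟨?_, ?_⟩
  · rw [forall_nakanoQ_nonneg_iff_posSemidef hH, posSemidef_iff_exists_conjTranspose_mul_self]
    simp_rw [coeffMat_surjective.exists, nakanoMat_eq_conjTranspose_mul_self_iff]
  · rw [forall_nakanoQ_pos_iff_posDef hH]
    constructor
    · intro hR
      obtain ⟨N, C, hC⟩ := posSemidef_iff_exists_conjTranspose_mul_self.mp hR.posSemidef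
      obtain ⟨B, rfl⟩ := coeffMat_surjective C
      refine ⟨N, B, nakanoMat_eq_conjTranspose_mul_self_iff.mp hC, ?_⟩
      rw [posDef_conjTranspose_mul_self_iff_rank_eq.mp (hC ▸ hR), Fintype.card_prod,
        Fintype.card_fin, Fintype.card_fin]
    · rintro ⟨N, B, hB, hrank⟩
      rw [nakanoMat_eq_conjTranspose_mul_self_iff.mpr hB]
      refine posDef_conjTranspose_mul_self_iff_rank_eq.mpr ?_
      rw [hrank, Fintype.card_prod, Fintype.card_fin, Fintype.card_fin]
end

section
/- If λ, μ, ν are partitions with λ_i = μ_i + ν_i for all i, then the Littlewood–Richardson coefficient c^λ_{μν} equals 1. -/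
open Finset MvPolynomial

/-- Complete homogeneous symmetric polynomial of degree `m` in `M` variables. -/
noncomputable def hsymm (M m : ℕ) : MvPolynomial (Fin M) ℚ :=
  ∑ d ∈ Finset.Nat.antidiagonalTuple M m, ∏ i, (X i : MvPolynomial (Fin M) ℚ) ^ d i

/-- `h_m` with integer index (`0` for negative `m`). -/
noncomputable def hIdx (M : ℕ) (m : ℤ) : MvPolynomial (Fin M) ℚ :=
  if 0 ≤ m then hsymm M m.toNat else 0

/-- The Schur polynomial of the partition `λ` (a tuple of length `t`, weakly decreasing)
in `M` variables, via the Jacobi–Trudi determinant `s_λ = det(h_{λ_i − i + j})`. -/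
noncomputable def schurJT (M t : ℕ) (lam : Fin t → ℕ) : MvPolynomial (Fin M) ℚ :=
  Matrix.det (Matrix.of fun i j : Fin t =>
    hIdx M ((lam i : ℤ) + ((j : ℕ) : ℤ) - ((i : ℕ) : ℤ)))

/-- The finite set of partitions of `K` with at most `k` parts, as weakly decreasing
`k`-tuples summing to `K`. -/
def partitionTuples (k K : ℕ) : Finset (Fin k → ℕ) :=
  (Finset.Nat.antidiagonalTuple k K).filter fun κ => ∀ i j : Fin k, i ≤ j → κ j ≤ κ i

/-- The conjugate partition: `(conjPart r λ) i = #{j | λ_j ≥ i + 1}` (0-indexed `i`). -/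
def conjPart (r : ℕ) {k : ℕ} (lam : Fin k → ℕ) : Fin r → ℕ :=
  fun i => (Finset.univ.filter fun j : Fin k => (i : ℕ) < lam j).card

/-!
Multiplying `s_μ s_ν = ∑ c_κ s_κ` by the alternant `a_δ` twice and using the bialternant
formula `s_κ a_δ = a_{κ+δ}` gives `a_{μ+δ} a_{ν+δ} = a_δ ∑ c_κ a_{κ+δ}`. For strictly
decreasing `β` the lex-leading term of `a_β` is `x^β`, so the leading term of the left side is
`x^{μ+ν+2δ}`, while the summands on the right have pairwise distinct leading monomials
`x^{κ+2δ}`. Hence the lex-largest `κ` with `c_κ ≠ 0` is `μ + ν`, and `c_{μ+ν} = 1`.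
-/

open scoped MonomialOrder

open Finsupp (equivFunOnFinite)

open MonomialOrder (lex)

namespace MonomialOrder

variable {σ R ι : Type*} [CommSemiring R] (m : MonomialOrder σ)

theorem exists_degree_sum_eq_and_leadingCoeff_sum_eq {s : Finset ι} (hs : s.Nonempty)
    {f : ι → MvPolynomial σ R} (hf : Set.InjOn (fun i => m.degree (f i)) s) :
    ∃ i ∈ s, m.degree (∑ j ∈ s, f j) = m.degree (f i) ∧
      m.leadingCoeff (∑ j ∈ s, f j) = m.leadingCoeff (f i) := by
  classical
  induction s using Finset.induction_on_max_value (fun i => m.toSyn (m.degree (f i))) with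
  | empty => exact absurd hs Finset.not_nonempty_empty
  | insert a s ha hmax ih =>
    rw [Finset.sum_insert ha]
    rcases s.eq_empty_or_nonempty with rfl | hs'
    · exact ⟨a, Finset.mem_insert_self a ∅, by simp⟩
    obtain ⟨i, hi, hdeg, -⟩ := ih hs' (hf.mono (Finset.subset_insert a s))
    have hlt : m.degree (∑ j ∈ s, f j) ≺[m] m.degree (f a) := by
      refine hdeg ▸ (hmax i hi).lt_of_ne fun h => ?_
      have := hf (Finset.mem_insert_of_mem hi) (Finset.mem_insert_self a s) (m.toSyn.injective h)
      exact ha (this ▸ hi)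
    exact ⟨a, Finset.mem_insert_self a s, m.degree_add_of_lt hlt, m.leadingCoeff_add_of_lt hlt⟩

end MonomialOrder

section Alternant

variable {R : Type*} [CommRing R] {n : ℕ}

variable (R) in
noncomputable def alternant (β : Fin n → ℕ) : MvPolynomial (Fin n) R :=
  (Matrix.of fun i j : Fin n => (X j : MvPolynomial (Fin n) R) ^ β i).det

theorem alternant_eq_sum (β : Fin n → ℕ) :
    alternant R β = ∑ σ : Equiv.Perm (Fin n),
      (Equiv.Perm.sign σ : ℤ) • monomial (equivFunOnFinite.symm (β ∘ σ)) (1 : R) := by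
  refine (Matrix.det_apply _).trans (Finset.sum_congr rfl fun σ _ => ?_)
  simp [Units.smul_def, monomial_eq, Finsupp.prod_fintype]

theorem support_alternant_subset (β : Fin n → ℕ) :
    (alternant R β).support ⊆
      Finset.univ.image fun σ : Equiv.Perm (Fin n) => equivFunOnFinite.symm (β ∘ σ) := by
  classical
  rw [alternant_eq_sum]
  refine support_sum.trans (Finset.biUnion_subset.2 fun σ _ => ?_)
  exact support_smul.trans (support_monomial_subset.trans (by simp))

theorem coeff_alternant_self {β : Fin n → ℕ} (hβ : Function.Injective β) :
    coeff (equivFunOnFinite.symm β) (alternant R β) = 1 := by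
  classical
  rw [alternant_eq_sum, coeff_sum, Finset.sum_eq_single 1 (fun σ _ hσ => ?_) (by simp)]
  · simp
  · have hne : equivFunOnFinite.symm (β ∘ σ) ≠ equivFunOnFinite.symm β :=
      fun h => hσ (Equiv.ext fun i => hβ (congr_fun (equivFunOnFinite.symm.injective h) i))
    rw [coeff_smul, coeff_monomial, if_neg hne, smul_zero]

theorem lex_comp_perm_lt {β : Fin n → ℕ} (hβ : StrictAnti β) {σ : Equiv.Perm (Fin n)}
    (hσ : σ ≠ 1) :
    equivFunOnFinite.symm (β ∘ σ) ≺[lex] equivFunOnFinite.symm β := by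
  have hmoved : {j | σ j ≠ j}.Nonempty := by simpa [Set.Nonempty, Equiv.ext_iff] using hσ
  obtain ⟨i, hi, hmin⟩ := wellFounded_lt.has_min _ hmoved
  have hfix : ∀ j < i, σ j = j := fun j hj => by_contra fun h => hmin j h hj
  -- `σ i < i` is impossible, since `σ` fixes `σ i` and is injective
  have hlt : i < σ i := (lt_or_gt_of_ne hi).resolve_left fun h =>
    hi (σ.injective (hfix _ h))
  exact MonomialOrder.lex_lt_iff.2 <|
    Finsupp.Lex.lt_iff.2 ⟨i, fun j hj => by simp [hfix j hj], hβ hlt⟩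

theorem degree_alternant [Nontrivial R] {β : Fin n → ℕ} (hβ : StrictAnti β) :
    lex.degree (alternant R β) = equivFunOnFinite.symm β := by
  refine lex.toSyn.injective (le_antisymm ?_ ?_)
  · refine lex.degree_le_iff.2 fun e he => ?_
    obtain ⟨σ, -, rfl⟩ := Finset.mem_image.1 (support_alternant_subset β he)
    rcases eq_or_ne σ 1 with rfl | hσ
    · rfl
    · exact (lex_comp_perm_lt hβ hσ).le
  · exact lex.le_degree (by simp [coeff_alternant_self hβ.injective])

theorem monic_alternant [Nontrivial R] {β : Fin n → ℕ} (hβ : StrictAnti β) :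
    lex.Monic (alternant R β) := by
  rw [MonomialOrder.Monic, MonomialOrder.leadingCoeff, degree_alternant hβ,
    coeff_alternant_self hβ.injective]

end Alternant

theorem PowerSeries.one_sub_C_mul_X_mul_mk_pow {A : Type*} [CommRing A] (a : A) :
    (1 - PowerSeries.C a * PowerSeries.X) * PowerSeries.mk (a ^ ·) = 1 := by
  rw [mul_comm]
  simpa [PowerSeries.rescale_mk, PowerSeries.rescale_X] using
    congrArg (PowerSeries.rescale a) (PowerSeries.mk_one_mul_one_sub_eq_one A)

section JacobiTrudi

variable {n : ℕ}

noncomputable def hsymmSeries (n : ℕ) : PowerSeries (MvPolynomial (Fin n) ℚ) :=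
  PowerSeries.mk (_root_.hsymm n)

theorem hsymmSeries_eq_prod :
    hsymmSeries n = ∏ i : Fin n, PowerSeries.mk ((X i : MvPolynomial (Fin n) ℚ) ^ ·) := by
  classical
  refine PowerSeries.ext fun d => ?_
  rw [PowerSeries.coeff_prod, hsymmSeries, PowerSeries.coeff_mk, _root_.hsymm]
  refine Finset.sum_equiv equivFunOnFinite.symm (fun e => ?_) (fun e _ => ?_)
  · simp [Finset.Nat.mem_antidiagonalTuple]
  · simp

-- Its `k`-th coefficient is `(-1)^k e_k` of the variables other than `x_j`.
noncomputable def elementaryPolyErase (j : Fin n) : Polynomial (MvPolynomial (Fin n) ℚ) :=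
  ∏ i ∈ Finset.univ.erase j, (1 - Polynomial.C (X i) * Polynomial.X)

theorem natDegree_elementaryPolyErase_lt (j : Fin n) : (elementaryPolyErase j).natDegree < n := by
  refine (Polynomial.natDegree_prod_le _ _).trans_lt
    ((Finset.sum_le_card_nsmul _ _ 1 fun i _ => by compute_degree).trans_lt ?_)
  simpa [Finset.card_erase_of_mem] using j.pos

theorem elementaryPolyErase_mul_hsymmSeries (j : Fin n) :
    (elementaryPolyErase j : PowerSeries (MvPolynomial (Fin n) ℚ)) * hsymmSeries n =
      PowerSeries.mk ((X j : MvPolynomial (Fin n) ℚ) ^ ·) := by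
  rw [hsymmSeries_eq_prod, ← Finset.mul_prod_erase _ _ (Finset.mem_univ j), mul_left_comm,
    elementaryPolyErase, ← Polynomial.coeToPowerSeries.ringHom_apply, map_prod,
    ← Finset.prod_mul_distrib]
  simp [PowerSeries.one_sub_C_mul_X_mul_mk_pow]

-- The coefficient of `t^b` in `elementaryPolyErase_mul_hsymmSeries`.
theorem sum_coeff_elementaryPolyErase_mul_hIdx (j : Fin n) (b : ℕ) :
    ∑ k : Fin n, (elementaryPolyErase j).coeff k * hIdx n (b - k) = X j ^ b := by
  have hcoeff := congrArg (PowerSeries.coeff b) (elementaryPolyErase_mul_hsymmSeries j)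
  rw [PowerSeries.coeff_mul, Finset.Nat.sum_antidiagonal_eq_sum_range_succ_mk,
    PowerSeries.coeff_mk] at hcoeff
  let f (k : ℕ) := (elementaryPolyErase j).coeff k * hIdx n (b - k)
  calc ∑ k : Fin n, f k
      = ∑ k ∈ Finset.range n, f k := Fin.sum_univ_eq_sum_range f n
    _ = ∑ k ∈ Finset.range (n + (b + 1)), f k := by
      refine (Finset.eventually_constant_sum (fun k hk => ?_) (Nat.le_add_right _ _)).symm
      simp [f, Polynomial.coeff_eq_zero_of_natDegree_lt
        ((natDegree_elementaryPolyErase_lt j).trans_le hk)]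
    _ = ∑ k ∈ Finset.range (b + 1), f k := by
      refine Finset.eventually_constant_sum (fun k hk => ?_) (Nat.le_add_left _ _)
      simp only [f, hIdx, if_neg (show ¬ (0 : ℤ) ≤ b - k by omega), mul_zero]
    _ = X j ^ b := by
      rw [← hcoeff]
      refine Finset.sum_congr rfl fun k hk => ?_
      have hkb : k ≤ b := Nat.lt_succ_iff.1 (Finset.mem_range.1 hk)
      simp [f, hIdx, hsymmSeries, Polynomial.coeff_coe, hkb]

def staircase (n : ℕ) : Fin n → ℕ := fun i => i.rev

noncomputable def jacobiTrudiMatrix (κ : Fin n → ℕ) :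
    Matrix (Fin n) (Fin n) (MvPolynomial (Fin n) ℚ) :=
  Matrix.of fun i j => hIdx n ((κ i : ℤ) + ((j : ℕ) : ℤ) - ((i : ℕ) : ℤ))

theorem schurJT_eq_det_jacobiTrudiMatrix (κ : Fin n → ℕ) :
    schurJT n n κ = (jacobiTrudiMatrix κ).det :=
  rfl

noncomputable def elementaryMatrix (n : ℕ) : Matrix (Fin n) (Fin n) (MvPolynomial (Fin n) ℚ) :=
  Matrix.of fun k j => (elementaryPolyErase j).coeff k.rev

theorem jacobiTrudiMatrix_mul_elementaryMatrix (κ : Fin n → ℕ) :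
    jacobiTrudiMatrix κ * elementaryMatrix n =
      Matrix.of fun i j => (X j : MvPolynomial (Fin n) ℚ) ^ (κ + staircase n) i := by
  ext i j : 1
  rw [Matrix.mul_apply, Matrix.of_apply, ← sum_coeff_elementaryPolyErase_mul_hIdx j]
  refine Fintype.sum_equiv Fin.revPerm _ _ fun k => ?_
  have hk := k.isLt
  have hi := i.isLt
  simp only [jacobiTrudiMatrix, elementaryMatrix, staircase, Matrix.of_apply, Fin.revPerm_apply,
    Pi.add_apply, Fin.val_rev, mul_comm (Polynomial.coeff _ _)]
  congr 2
  omega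

theorem schurJT_zero : schurJT n n 0 = 1 := by
  have hdiag : ∀ i, jacobiTrudiMatrix (0 : Fin n → ℕ) i i = 1 := fun i => by
    simp [jacobiTrudiMatrix, hIdx, _root_.hsymm, Finset.Nat.antidiagonalTuple_zero_right]
  have htri : (jacobiTrudiMatrix (0 : Fin n → ℕ)).IsUpperTriangular := fun i j hij => by
    have : (j : ℕ) < i := hij
    simp only [jacobiTrudiMatrix, Matrix.of_apply, hIdx, Pi.zero_apply]
    rw [if_neg (by omega)]
  rw [schurJT_eq_det_jacobiTrudiMatrix, Matrix.det_of_isUpperTriangular htri]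
  simp [hdiag]

-- `det (elementaryMatrix n) = a_δ` is the case `κ = 0`, whose Jacobi–Trudi matrix is
-- unitriangular.
theorem schurJT_mul_alternant_staircase (κ : Fin n → ℕ) :
    schurJT n n κ * alternant ℚ (staircase n) = alternant ℚ (κ + staircase n) := by
  have hE : (elementaryMatrix n).det = alternant ℚ (staircase n) := by
    simpa [← schurJT_eq_det_jacobiTrudiMatrix, schurJT_zero, alternant] using
      congrArg Matrix.det (jacobiTrudiMatrix_mul_elementaryMatrix (0 : Fin n → ℕ))
  rw [← hE, schurJT_eq_det_jacobiTrudiMatrix, ← Matrix.det_mul,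
    jacobiTrudiMatrix_mul_elementaryMatrix, alternant]

end JacobiTrudi

section LittlewoodRichardson

variable {n : ℕ}

theorem strictAnti_staircase : StrictAnti (staircase n) := fun i j hij => by
  simp only [staircase, Fin.val_rev]
  omega

theorem strictAnti_add_staircase {κ : Fin n → ℕ} (hκ : Antitone κ) :
    StrictAnti (κ + staircase n) :=
  hκ.add_strictAnti strictAnti_staircase

theorem antitone_of_mem_partitionTuples {k K : ℕ} {κ : Fin k → ℕ}
    (hκ : κ ∈ partitionTuples k K) : Antitone κ :=
  fun i j hij => (Finset.mem_filter.1 hκ).2 i j hij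

theorem alternant_mul_eq_alternant_staircase_mul_sum (μ ν : Fin n → ℕ)
    (s : Finset (Fin n → ℕ)) (c : (Fin n → ℕ) → ℚ)
    (hc : schurJT n n μ * schurJT n n ν = ∑ κ ∈ s, C (c κ) * schurJT n n κ) :
    alternant ℚ (μ + staircase n) * alternant ℚ (ν + staircase n) =
      alternant ℚ (staircase n) * ∑ κ ∈ s, C (c κ) * alternant ℚ (κ + staircase n) := by
  simp only [← schurJT_mul_alternant_staircase]
  calc schurJT n n μ * alternant ℚ (staircase n) * (schurJT n n ν * alternant ℚ (staircase n))
      = alternant ℚ (staircase n) * ((schurJT n n μ * schurJT n n ν) *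
          alternant ℚ (staircase n)) := by ring
    _ = _ := by
      rw [hc, Finset.sum_mul, Finset.mul_sum, Finset.mul_sum]
      simp only [mul_assoc]

variable {R : Type*} [CommRing R] [IsDomain R]

theorem degree_eq_and_monic_of_alternant_mul_eq {μ ν : Fin n → ℕ} (hμ : Antitone μ)
    (hν : Antitone ν) {P : MvPolynomial (Fin n) R}
    (h : alternant R (μ + staircase n) * alternant R (ν + staircase n) =
      alternant R (staircase n) * P) :
    lex.degree P = equivFunOnFinite.symm (μ + ν + staircase n) ∧ lex.Monic P := by
  have hμδ := strictAnti_add_staircase hμ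
  have hνδ := strictAnti_add_staircase hν
  have hδ := strictAnti_staircase (n := n)
  have hP : lex.Monic P := by
    have hmonic := (monic_alternant (R := R) hμδ).mul (monic_alternant hνδ)
    rwa [h, MonomialOrder.Monic, MonomialOrder.leadingCoeff_mul,
      (monic_alternant hδ).leadingCoeff_eq_one, one_mul] at hmonic
  refine ⟨add_left_cancel (a := equivFunOnFinite.symm (staircase n)) ?_, hP⟩
  have hdeg := congrArg lex.degree h
  rw [MonomialOrder.degree_mul (monic_alternant hμδ).ne_zero (monic_alternant hνδ).ne_zero,
    MonomialOrder.degree_mul (monic_alternant hδ).ne_zero hP.ne_zero, degree_alternant hμδ,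
    degree_alternant hνδ, degree_alternant hδ] at hdeg
  rw [← hdeg]
  ext i
  simp only [Finsupp.coe_add, Pi.add_apply, Finsupp.coe_equivFunOnFinite_symm]
  ring

theorem exists_degree_sum_C_mul_alternant {s : Finset (Fin n → ℕ)} (hs : s.Nonempty)
    (hanti : ∀ κ ∈ s, Antitone κ) {c : (Fin n → ℕ) → R}
    (hc : ∀ κ ∈ s, c κ ≠ 0) :
    ∃ κ ∈ s,
      lex.degree (∑ κ ∈ s, C (c κ) * alternant R (κ + staircase n)) =
        equivFunOnFinite.symm (κ + staircase n) ∧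
      lex.leadingCoeff (∑ κ ∈ s, C (c κ) * alternant R (κ + staircase n)) = c κ := by
  have hmonic (κ) (hκ : κ ∈ s) : lex.Monic (alternant R (κ + staircase n)) :=
    monic_alternant (strictAnti_add_staircase (hanti κ hκ))
  have hdeg (κ) (hκ : κ ∈ s) : lex.degree (C (c κ) * alternant R (κ + staircase n)) =
      equivFunOnFinite.symm (κ + staircase n) := by
    rw [lex.degree_mul (C_ne_zero.2 (hc κ hκ)) (hmonic κ hκ).ne_zero,
      degree_alternant (strictAnti_add_staircase (hanti κ hκ)), MonomialOrder.degree_C, zero_add]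
  have hinj : Set.InjOn (fun κ => lex.degree (C (c κ) * alternant R (κ + staircase n))) s :=
    fun κ hκ κ' hκ' h => by
      simpa using
        equivFunOnFinite.symm.injective ((hdeg κ hκ).symm.trans (h.trans (hdeg κ' hκ')))
  obtain ⟨κ, hκ, hsum, hlc⟩ := lex.exists_degree_sum_eq_and_leadingCoeff_sum_eq hs hinj
  refine ⟨κ, hκ, hsum.trans (hdeg κ hκ), ?_⟩
  rw [hlc, MonomialOrder.leadingCoeff_mul, MonomialOrder.leadingCoeff_C,
    (hmonic κ hκ).leadingCoeff_eq_one, mul_one]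

end LittlewoodRichardson

theorem lr_coeff_of_sum_eq_one_general {K : ℕ} (μ ν lam : Fin K → ℕ)
    (hμ : Antitone μ) (hν : Antitone ν)
    (hlam : ∀ i, lam i = μ i + ν i)
    (c : (Fin K → ℕ) → ℕ)
    (hc : schurJT K K μ * schurJT K K ν =
      ∑ κ ∈ partitionTuples K K, (c κ : MvPolynomial (Fin K) ℚ) * schurJT K K κ) :
    c lam = 1 := by
  classical
  set S := (partitionTuples K K).filter (c · ≠ 0)
  have hexp := alternant_mul_eq_alternant_staircase_mul_sum μ ν S (fun κ => c κ) <| by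
    rw [hc, ← Finset.sum_filter_of_ne (p := (c · ≠ 0)) fun κ _ h h0 => h (by simp [h0])]
    simp [S, map_natCast]
  obtain ⟨hdegP, hmonicP⟩ := degree_eq_and_monic_of_alternant_mul_eq hμ hν hexp
  obtain ⟨κ, -, hdeg, hlc⟩ := exists_degree_sum_C_mul_alternant (c := (c · : _ → ℚ))
    (Finset.nonempty_of_sum_ne_zero hmonicP.ne_zero)
    (fun κ hκ => antitone_of_mem_partitionTuples (Finset.mem_filter.1 hκ).1)
    (fun κ hκ => Nat.cast_ne_zero.2 (Finset.mem_filter.1 hκ).2)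
  have hκ : κ = lam := funext fun i => by
    simpa [hlam] using congr_fun (equivFunOnFinite.symm.injective (hdeg.symm.trans hdegP)) i
  rw [← hκ]
  exact_mod_cast hlc.symm.trans hmonicP.leadingCoeff_eq_one

/-- if `λ = μ + ν` componentwise, then the Littlewood–Richardson
coefficient `c^λ_{μν}` (the coefficient of `s_λ` in the Schur expansion of `s_μ · s_ν`)
equals `1`.  The LR coefficients are characterized as the (unique) expansion coefficients
of `s_μ · s_ν` in the Schur basis. -/
theorem lr_coeff_of_sum_eq_one {K : ℕ} (μ ν lam : Fin K → ℕ)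
    (hμ : Antitone μ) (hν : Antitone ν)
    (hK : ∑ i, μ i + ∑ i, ν i = K)
    (hlam : ∀ i, lam i = μ i + ν i)
    (c : (Fin K → ℕ) → ℕ)
    (hc : schurJT K K μ * schurJT K K ν =
      ∑ κ ∈ partitionTuples K K, (c κ : MvPolynomial (Fin K) ℚ) * schurJT K K κ) :
    c lam = 1 :=
  lr_coeff_of_sum_eq_one_general μ ν lam hμ hν hlam c hc
end

section
/- In the vanishing analysis for Schur forms: if complex numbers q_{σt} (σ ∈ S_k, t ∈ T) satisfy Σ_{σ∈S_k} q_{σt} δ_{ρ_{σ(1)}l_1} ⋯ δ_{ρ_{σ(k)}l_k} = 0 for all ρ, l ∈ [1,r]^k and all t ∈ T, and if the character χ_λ(σ) = Σ_i a_{ii}(σ) with q_{σt} = conj(a_t(σ)) comes from the irreducible representation associated to λ ∈ Λ(k,r), then P_λ(I_r) = 0; consequently, since P_λ(I_r) ≥ 1, no such nonzero system exists. In particular, for k ≤ r, taking ρ_i = l_i = i gives q_{Id,t} = 0 for all t. -/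
open Finset

/-- `c_m(I_r) = C(r,m)` with integer index (`0` for negative index). -/
def chernChoose (r : ℕ) (m : ℤ) : ℚ :=
  if 0 ≤ m then (r.choose m.toNat : ℚ) else 0

/-- The value `P_λ(I_r) = det(c_{λ_i−i+j}(I_r))` of the Schur polynomial at the identity. -/
def schurAtId (r : ℕ) {k : ℕ} (lam : Fin k → ℕ) : ℚ :=
  Matrix.det (Matrix.of fun i j : Fin k =>
    chernChoose r ((lam i : ℤ) + ((j : ℕ) : ℤ) - ((i : ℕ) : ℤ)))

def Tmat (N : ℕ) : Matrix (Fin N) (Fin N) ℚ := fun a b =>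
  (if (b : ℕ) = a then 1 else 0) + (if (b : ℕ) = (a : ℕ) + 1 then 1 else 0)

lemma Tmat_nonneg {N : ℕ} (a b : Fin N) : 0 ≤ Tmat N a b := by
  unfold Tmat; positivity

lemma Tmat_eq_one {N : ℕ} {a b : Fin N} (h : (b : ℕ) = a ∨ (b : ℕ) = (a : ℕ) + 1) :
    Tmat N a b = 1 := by
  unfold Tmat
  rcases h with h | h
  · rw [if_pos h, if_neg (by omega)]; norm_num
  · rw [if_neg (by omega), if_pos h]; norm_num

lemma Tmat_cond {N : ℕ} {a b : Fin N} (h : Tmat N a b ≠ 0) :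
    (b : ℕ) = a ∨ (b : ℕ) = (a : ℕ) + 1 := by
  by_contra hc
  push_neg at hc
  exact h (by unfold Tmat; rw [if_neg hc.1, if_neg hc.2]; norm_num)

lemma det_submatrix_mul {N k : ℕ} (A B : Matrix (Fin N) (Fin N) ℚ) (u v : Fin k → Fin N) :
    ((A * B).submatrix u v).det =
      ∑ p : Fin k → Fin N, (∏ i, B (p i) (v i)) * ((A.submatrix u p).det) := by
  simp only [Matrix.det_apply', Matrix.submatrix_apply, Matrix.mul_apply, prod_univ_sum,
    mul_sum, Fintype.piFinset_univ]
  rw [Finset.sum_comm]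
  refine Finset.sum_congr rfl fun p _ => ?_
  refine Finset.sum_congr rfl fun σ _ => ?_
  rw [Finset.prod_mul_distrib]
  ring

lemma key {N k : ℕ} (s : ℕ) : ∀ (u v : Fin k → Fin N), StrictMono u → StrictMono v →
    0 ≤ ((Tmat N ^ s).submatrix u v).det ∧
    ((∀ i, (u i : ℕ) ≤ v i ∧ (v i : ℕ) ≤ (u i : ℕ) + s) →
      0 < ((Tmat N ^ s).submatrix u v).det) := by
  induction s with
  | zero =>
    intro u v hu hv
    have hone : ∀ w : Fin k → Fin N, StrictMono w →
        ((Tmat N ^ 0).submatrix w w).det = 1 := by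
      intro w hw
      rw [pow_zero]
      have : (1 : Matrix (Fin N) (Fin N) ℚ).submatrix w w = 1 := by
        ext i j
        simp [Matrix.one_apply, hw.injective.eq_iff]
      rw [this, Matrix.det_one]
    constructor
    · by_cases huv : u = v
      · subst huv; rw [hone u hu]; norm_num
      · -- ranges differ or equal
        have hcu : (Finset.image u Finset.univ).card = k := by
          rw [Finset.card_image_of_injective _ hu.injective, Finset.card_univ, Fintype.card_fin]
        have hcv : (Finset.image v Finset.univ).card = k := by
          rw [Finset.card_image_of_injective _ hv.injective, Finset.card_univ, Fintype.card_fin]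
        by_cases hsub : Finset.image u Finset.univ ⊆ Finset.image v Finset.univ
        · exfalso
          have heq : Finset.image u Finset.univ = Finset.image v Finset.univ :=
            Finset.eq_of_subset_of_card_le hsub (by rw [hcu, hcv])
          have h1 := Finset.orderEmbOfFin_unique hcv (f := u)
            (fun x => heq ▸ Finset.mem_image_of_mem u (Finset.mem_univ x)) hu
          have h2 := Finset.orderEmbOfFin_unique hcv (f := v)
            (fun x => Finset.mem_image_of_mem v (Finset.mem_univ x)) hv
          exact huv (h1.trans h2.symm)
        · obtain ⟨x, hxS, hxT⟩ := Finset.not_subset.mp hsub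
          obtain ⟨i, _, rfl⟩ := Finset.mem_image.mp hxS
          have : ((Tmat N ^ 0).submatrix u v).det = 0 := by
            apply Matrix.det_eq_zero_of_row_eq_zero i
            intro j
            rw [pow_zero, Matrix.submatrix_apply, Matrix.one_apply, if_neg]
            exact fun h => hxT (Finset.mem_image.mpr ⟨j, Finset.mem_univ j, h.symm⟩)
          rw [this]
    · intro hcond
      have huv : u = v := funext fun i => Fin.ext (by have := (hcond i).1; have := (hcond i).2; omega)
      subst huv
      rw [hone u hu]; norm_num
  | succ s ih =>
    intro u v hu hv
    rw [pow_succ, det_submatrix_mul]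
    have hterm : ∀ p : Fin k → Fin N,
        0 ≤ (∏ i, Tmat N (p i) (v i)) * (((Tmat N ^ s)).submatrix u p).det := by
      intro p
      by_cases hz : ∃ j, Tmat N (p j) (v j) = 0
      · obtain ⟨j, hj⟩ := hz
        rw [Finset.prod_eq_zero (Finset.mem_univ j) hj, zero_mul]
      · push_neg at hz
        have hpv : ∀ j, (v j : ℕ) = p j ∨ (v j : ℕ) = (p j : ℕ) + 1 := fun j => Tmat_cond (hz j)
        by_cases hinj : Function.Injective p
        · have hp : StrictMono p := by
            intro i j hij
            have h1 : (p i : ℕ) ≤ v i := by rcases hpv i with h | h <;> omega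
            have h2 : (v j : ℕ) ≤ (p j : ℕ) + 1 := by rcases hpv j with h | h <;> omega
            have h3 : (v i : ℕ) < v j := hv hij
            have hne : (p i : ℕ) ≠ (p j : ℕ) := by
              simpa [Fin.val_eq_val] using fun h => absurd (hinj h) (ne_of_lt hij)
            rw [Fin.lt_def]
            omega
          exact mul_nonneg (Finset.prod_nonneg fun j _ => Tmat_nonneg _ _) ((ih u p hu hp).1)
        · obtain ⟨j1, j2, he, hne⟩ : ∃ j1 j2, p j1 = p j2 ∧ j1 ≠ j2 := by
            rw [Function.Injective] at hinj
            push_neg at hinj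
            exact hinj
          have : (((Tmat N ^ s)).submatrix u p).det = 0 :=
            Matrix.det_zero_of_column_eq hne fun i => by
              simp [Matrix.submatrix_apply, he]
          rw [this, mul_zero]
    refine ⟨Finset.sum_nonneg fun p _ => hterm p, fun hcond => ?_⟩
    have hmax : ∀ i, max (u i : ℕ) ((v i : ℕ) - 1) < N := by
      intro i
      have h1 := (hcond i).1
      have := (v i).isLt
      omega
    set f0 : Fin k → Fin N := fun i => ⟨max (u i : ℕ) ((v i : ℕ) - 1), hmax i⟩ with hf0
    apply Finset.sum_pos' (fun p _ => hterm p)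
    refine ⟨f0, Finset.mem_univ _, ?_⟩
    have h1 : ∏ i, Tmat N (f0 i) (v i) = 1 := by
      refine Finset.prod_eq_one fun j _ => Tmat_eq_one ?_
      have h1 := (hcond j).1
      simp only [hf0]
      omega
    rw [h1, one_mul]
    have hf0m : StrictMono f0 := by
      intro i j hij
      have h1 := hu hij
      have h2 := hv hij
      rw [Fin.lt_def] at h1 h2 ⊢
      have h3 := (hcond i).1
      simp only [hf0]
      omega
    refine (ih u f0 hu hf0m).2 fun i => ⟨?_, ?_⟩
    · simp only [hf0]; exact le_max_left _ _
    · have h2 := (hcond i).2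
      simp only [hf0]
      omega

lemma chernChoose_pascal (s : ℕ) (d : ℤ) :
    chernChoose (s + 1) d = chernChoose s d + chernChoose s (d - 1) := by
  unfold chernChoose
  rcases lt_trichotomy d 0 with h | h | h
  · rw [if_neg (by omega), if_neg (by omega), if_neg (by omega)]; ring
  · subst h; norm_num
  · obtain ⟨t, rfl⟩ : ∃ t : ℕ, d = (t : ℤ) + 1 := ⟨(d - 1).toNat, by omega⟩
    rw [if_pos (by omega), if_pos (by omega), if_pos (by omega)]
    have h1 : ((t : ℤ) + 1).toNat = t + 1 := by omega
    have h2 : ((t : ℤ) + 1 - 1).toNat = t := by omega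
    rw [h1, h2, Nat.choose_succ_succ]
    push_cast; ring

lemma Tpow {N : ℕ} (s : ℕ) (a b : Fin N) :
    (Tmat N ^ s) a b = chernChoose s ((b : ℤ) - (a : ℤ)) := by
  induction s generalizing a b with
  | zero =>
    simp only [pow_zero, Matrix.one_apply, chernChoose]
    rcases eq_or_ne a b with rfl | h
    · simp
    · rw [if_neg h]
      rcases lt_or_ge ((b : ℤ) - a) 0 with h' | h'
      · rw [if_neg (by omega)]
      · rw [if_pos h']
        have : ((b : ℤ) - a).toNat ≠ 0 := by
          have : (b : ℕ) ≠ (a : ℕ) := fun hh => h (Fin.ext hh.symm)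
          omega
        rw [Nat.choose_eq_zero_of_lt (by omega)]
        norm_num
  | succ s ih =>
    rw [pow_succ, Matrix.mul_apply, chernChoose_pascal]
    have : ∀ c : Fin N, (Tmat N ^ s) a c * Tmat N c b =
        (if (b : ℕ) = (c : ℕ) then (Tmat N ^ s) a c else 0) +
        (if (b : ℕ) = (c : ℕ) + 1 then (Tmat N ^ s) a c else 0) := by
      intro c; rw [Tmat]; rw [mul_add]
      congr 1 <;> split <;> ring
    rw [Finset.sum_congr rfl fun c _ => this c, Finset.sum_add_distrib]
    congr 1
    · simp only [Fin.val_eq_val, Finset.sum_ite_eq, Finset.mem_univ, if_pos, ih]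
    · rcases Nat.eq_zero_or_pos (b : ℕ) with hb | hb
      · rw [Finset.sum_eq_zero, chernChoose, if_neg (by omega)]
        intro c _; rw [if_neg (by omega)]
      · have hlt : (b : ℕ) - 1 < N := by omega
        rw [Finset.sum_eq_single (⟨(b : ℕ) - 1, hlt⟩ : Fin N)]
        · rw [if_pos (by simp; omega), ih]
          congr 1
          simp; omega
        · intro c _ hc
          rw [if_neg fun h => hc (Fin.ext (by simp; omega))]
        · intro h; exact absurd (Finset.mem_univ _) h

lemma schurAtId_pos {k r : ℕ} (lam : Fin k → ℕ) (hanti : Antitone lam)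
    (hk : ∀ i, lam i ≤ k) (hle : ∀ i, lam i ≤ r) : 0 < schurAtId r lam := by
  set N := 2 * k with hN
  have hu' : ∀ i : Fin k, k + (i : ℕ) - lam i < N := by
    intro i; have := hk i; have := i.isLt; omega
  have hv' : ∀ j : Fin k, k + (j : ℕ) < N := by
    intro j; have := j.isLt; omega
  set u : Fin k → Fin N := fun i => ⟨k + (i : ℕ) - lam i, hu' i⟩ with hudef
  set v : Fin k → Fin N := fun j => ⟨k + (j : ℕ), hv' j⟩ with hvdef
  have hu : StrictMono u := by
    intro i j hij
    have h1 : lam j ≤ lam i := hanti (le_of_lt hij)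
    have h2 := hk i
    rw [Fin.lt_def] at hij ⊢
    simp only [hudef]
    omega
  have hv : StrictMono v := by
    intro i j hij
    rw [Fin.lt_def] at hij ⊢
    simp only [hvdef]
    omega
  have hmat : schurAtId r lam = ((Tmat N ^ r).submatrix u v).det := by
    unfold schurAtId
    congr 1
    ext i j
    rw [Matrix.submatrix_apply, Tpow, Matrix.of_apply]
    congr 1
    simp only [hudef, hvdef]
    have := hk i
    omega
  rw [hmat]
  refine (key r u v hu hv).2 fun i => ⟨?_, ?_⟩ <;>
    · simp only [hudef, hvdef]
      have := hk i
      have := hle i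
      omega

/-- vanishing analysis for Schur forms: suppose the complex numbers
`q_{σt}` (`σ ∈ S_k`, `t ∈ T = [1,m]²`) satisfy
`∑_{σ} q_{σt} δ_{ρ_{σ(1)} l_1} ⋯ δ_{ρ_{σ(k)} l_k} = 0` for all `ρ, l ∈ [1,r]^k` and all
`t`, and the character `χ_λ(σ) = ∑_i a_{ii}(σ)` with `q_{σt} = conj(a_t(σ))` comes from
the representation associated with `λ ∈ Λ(k,r)`, in the sense that (up to a positive
normalization `C`) `P_λ(I_r) = C·∑_{ρ,σ} χ_λ(σ) δ_{ρ_1 ρ_{σ(1)}} ⋯ δ_{ρ_k ρ_{σ(k)}}`.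
Then `P_λ(I_r) = 0`; consequently, since `P_λ(I_r) ≥ 1`, no such system exists (`False`).
In particular, for `k ≤ r`, taking `ρ_i = l_i = i` gives `q_{Id,t} = 0` for all `t`. -/
theorem schur_vanishing_analysis {k r m : ℕ}
    (lam : Fin k → ℕ) (hanti : Antitone lam) (hsum : ∑ i, lam i = k)
    (hle : ∀ i, lam i ≤ r)
    (q : Equiv.Perm (Fin k) → Fin m × Fin m → ℂ)
    (a : Equiv.Perm (Fin k) → Matrix (Fin m) (Fin m) ℂ)
    (hrel : ∀ σ t, q σ t = (starRingEnd ℂ) (a σ t.1 t.2))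
    (C : ℝ) (hC : 0 < C)
    (hnorm : ((schurAtId r lam : ℚ) : ℂ) =
      C • ∑ ρ : Fin k → Fin r, ∑ σ : Equiv.Perm (Fin k),
        (∑ i, a σ i i) * ∏ j, (if ρ j = ρ (σ j) then (1 : ℂ) else 0))
    (hq : ∀ ρ l : Fin k → Fin r, ∀ t : Fin m × Fin m,
      (∑ σ : Equiv.Perm (Fin k), q σ t * ∏ j, (if ρ (σ j) = l j then (1 : ℂ) else 0)) = 0) :
    schurAtId r lam = 0 ∧ (k ≤ r → ∀ t, q 1 t = 0) ∧ False := by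
  have hk : ∀ i, lam i ≤ k := fun i =>
    hsum ▸ Finset.single_le_sum (f := lam) (fun _ _ => Nat.zero_le _) (Finset.mem_univ i)
  have hpos : 0 < schurAtId r lam := schurAtId_pos lam hanti hk hle
  have key0 : ∀ ρ : Fin k → Fin r, ∀ i : Fin m,
      ∑ σ : Equiv.Perm (Fin k), q σ (i, i) * ∏ j, (if ρ j = ρ (σ j) then (1 : ℂ) else 0) = 0 := by
    intro ρ i
    have heq : (∑ σ : Equiv.Perm (Fin k), q σ (i, i) * ∏ j, (if ρ j = ρ (σ j) then (1 : ℂ) else 0))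
        = ∑ σ : Equiv.Perm (Fin k), q σ (i, i) * ∏ j, (if ρ (σ j) = ρ j then (1 : ℂ) else 0) :=
      Finset.sum_congr rfl fun σ _ => by
        exact congrArg _ (Finset.prod_congr rfl fun j _ => if_congr eq_comm rfl rfl)
    exact heq.trans (hq ρ ρ (i, i))
  have hrel' : ∀ σ (i : Fin m), (starRingEnd ℂ) (a σ i i) = q σ (i, i) :=
    fun σ i => (hrel σ (i, i)).symm
  have hS : (∑ ρ : Fin k → Fin r, ∑ σ : Equiv.Perm (Fin k),
      (∑ i, a σ i i) * ∏ j, (if ρ j = ρ (σ j) then (1 : ℂ) else 0)) = 0 := by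
    rw [← star_eq_zero]
    simp only [star_sum, star_mul', star_prod, apply_ite (star : ℂ → ℂ), star_one, star_zero]
    simp only [← starRingEnd_apply, hrel']
    refine Finset.sum_eq_zero fun ρ _ => ?_
    simp only [Finset.sum_mul]
    rw [Finset.sum_comm]
    exact Finset.sum_eq_zero fun i _ => key0 ρ i
  rw [hS, smul_zero] at hnorm
  have hzero : schurAtId r lam = 0 := by exact_mod_cast hnorm
  exact (hpos.ne' hzero).elim
end

section
/- A Hermitian vector bundle (E,h^E) of rank r over an n-dimensional complex manifold is strongly decomposably positive of type II if and only if at each point x, with respect to a unitary frame, the curvature matrix has the form R^E_x = −B∧B̄ᵀ + A∧Āᵀ where the E-valued vectors 𝒜_{αp} = Σ_i A_{ipα} e_i and ℬ_{αp} = Σ_i B_{ipᾱ} e_i span orthogonal subspaces of E_x (span{𝒜} ⊥ span{ℬ}), and the coefficient matrices satisfy rank(𝐁) = r₁·n and rank(𝐀) = (r−r₁)·n where r₁ = dim span{ℬ}. -/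
open Finset

/-- The span inside `E_x ≅ ℂʳ` of the vectors `𝒜_{αp} = ∑_i A_{ipα} e_i`. -/
noncomputable def vecSpan {n r N : ℕ} (A : Fin r → Fin N → Fin n → ℂ) :
    Submodule ℂ (Fin r → ℂ) :=
  Submodule.span ℂ {x | ∃ α p, x = fun i => A i p α}

/-!
The Nakano form of `gramTensor B` (the coefficients of `B ∧ B̄ᵀ`) is `‖u 𝐁ᴴ‖²`, while the
Nakano form of the `A ∧ Āᵀ` part vanishes on vectors orthogonal to `span 𝒜`. Transposing the
tangent indices exchanges the two parts and the Nakano and dual Nakano forms. The rows of `𝐁`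
lie in `span ℬ ⊗ ℂⁿ`, so `rank 𝐁 = r₁ n` says exactly that `u ↦ u 𝐁ᴴ` is injective there.
This gives Nakano positivity on `E₁ = span ℬ`, and in the same way dual Nakano positivity on
`E₂ = span 𝒜`.

Conversely, let `P` and `Q` be the projections onto `E₁` and `E₂`. Block-diagonality splits
`R` as `Pᴴ R P + Qᴴ R Q` (acting on the `E`-indices). The Nakano matrix of the first summand is
positive semidefinite with kernel `E₂ ⊗ ℂⁿ`, and the dual Nakano matrix of the second is
positive semidefinite with kernel `E₁ ⊗ ℂⁿ`. Gram factorisations `CᴴC` give `B` and `A`. The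
rows of `C` are orthogonal to the kernel, so they lie in `E₁ ⊗ ℂⁿ` (resp. `E₂ ⊗ ℂⁿ`), and `C` is
injective there. This yields the orthogonality and both rank identities.
-/

open Matrix Module
open scoped ComplexOrder

theorem Complex.exists_pos_ofReal_eq_iff_pos {z : ℂ} : (∃ c : ℝ, 0 < c ∧ z = c) ↔ 0 < z := by
  rw [RCLike.pos_iff_exists_ofReal]
  exact exists_congr fun c => and_congr_right' eq_comm

namespace Matrix

variable {ι α : Type*} [Fintype ι] [CommRing α] [StarRing α]

theorem conjTranspose_mul_mul_apply (K S L : Matrix ι ι α) (j i : ι) :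
    (Kᴴ * S * L) j i = star (fun k => K k j) ⬝ᵥ (S *ᵥ fun k => L k i) := by
  rw [Matrix.mul_assoc, mul_apply']
  rfl

theorem dotProduct_conjTranspose_mul_mul_mulVec (K S : Matrix ι ι α) (v w : ι → α) :
    star v ⬝ᵥ ((Kᴴ * S * K) *ᵥ w) = star (K *ᵥ v) ⬝ᵥ (S *ᵥ (K *ᵥ w)) := by
  rw [← mulVec_mulVec, ← mulVec_mulVec, dotProduct_mulVec, vecMul_conjTranspose, star_star]

end Matrix

section Orthogonality

variable {ι κ : Type*}

def IsDotOrtho [Fintype ι] (U V : Submodule ℂ (ι → ℂ)) : Prop :=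
  ∀ x ∈ U, ∀ y ∈ V, x ⬝ᵥ star y = 0

namespace IsDotOrtho

variable [Fintype ι] {U V : Submodule ℂ (ι → ℂ)}

theorem symm (h : IsDotOrtho U V) : IsDotOrtho V U := fun x hx y hy => by
  rw [dotProduct_star, h y hy x hx, star_zero]

theorem mono {U' V' : Submodule ℂ (ι → ℂ)} (h : IsDotOrtho U V) (hU : U' ≤ U) (hV : V' ≤ V) :
    IsDotOrtho U' V' := fun x hx y hy => h x (hU hx) y (hV hy)

theorem disjoint (h : IsDotOrtho U V) : Disjoint U V :=
  Submodule.disjoint_def.mpr fun x hxU hxV => dotProduct_self_star_eq_zero.mp (h x hxU x hxV)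

theorem mem_of_forall_dotProduct_eq_zero (h : IsDotOrtho U V) (hUV : IsCompl U V) {x : ι → ℂ}
    (hx : ∀ y ∈ V, x ⬝ᵥ star y = 0) : x ∈ U := by
  have hyV := Submodule.sub_projection_mem hUV x
  have hy : (x - U.projection V hUV x) ⬝ᵥ star (x - U.projection V hUV x) = 0 := by
    rw [sub_dotProduct, hx _ hyV, h _ (Submodule.projection_apply_mem hUV x) _ hyV, sub_zero]
  rw [sub_eq_zero.mp (dotProduct_self_star_eq_zero.mp hy)]
  exact Submodule.projection_apply_mem hUV x

end IsDotOrtho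

theorem Matrix.rank_eq_finrank_iff_vecMul_conjTranspose_injOn [Fintype ι] {N : Type*}
    [Fintype N] (M : Matrix N ι ℂ) {S : Submodule ℂ (ι → ℂ)} (hM : ∀ p, M p ∈ S) :
    M.rank = finrank ℂ S ↔ ∀ x ∈ S, x ᵥ* Mᴴ = 0 → x = 0 := by
  have hspan : Submodule.span ℂ (Set.range M.row) ≤ S :=
    Submodule.span_le.mpr (Set.range_subset_iff.mpr hM)
  constructor
  · intro hrank x hx hx0
    rw [← Submodule.eq_of_le_of_finrank_eq hspan (M.rank_eq_finrank_span_row ▸ hrank),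
      ← range_vecMulLinear] at hx
    obtain ⟨c, rfl⟩ := hx
    rw [vecMulLinear_apply] at hx0 ⊢
    refine dotProduct_star_self_eq_zero.mp ?_
    calc star (c ᵥ* M) ⬝ᵥ c ᵥ* M = (c ᵥ* M) ⬝ᵥ (Mᴴ *ᵥ star c) := by
          rw [star_vecMul, dotProduct_comm]
      _ = 0 := by rw [dotProduct_mulVec, hx0, zero_dotProduct]
  · intro hinj
    refine le_antisymm (M.rank_eq_finrank_span_row ▸ Submodule.finrank_mono hspan) ?_
    have hf : Function.Injective (Mᴴ.vecMulLinear ∘ₗ S.subtype) := by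
      rw [← LinearMap.ker_eq_bot, LinearMap.ker_eq_bot']
      exact fun x hx => Subtype.ext (hinj x x.2 hx)
    calc finrank ℂ S = finrank ℂ (LinearMap.range (Mᴴ.vecMulLinear ∘ₗ S.subtype)) :=
          (LinearMap.finrank_range_of_inj hf).symm
      _ ≤ finrank ℂ (LinearMap.range Mᴴ.vecMulLinear) :=
          Submodule.finrank_mono (LinearMap.range_comp_le_range _ _)
      _ = M.rank := by rw [range_vecMulLinear, ← rank_eq_finrank_span_row, rank_conjTranspose]

def colsIn (κ : Type*) (S : Submodule ℂ (ι → ℂ)) : Submodule ℂ (ι × κ → ℂ) where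
  carrier := {x | ∀ a, (fun i => x (i, a)) ∈ S}
  add_mem' hx hy a := S.add_mem (hx a) (hy a)
  zero_mem' _ := S.zero_mem
  smul_mem' c _ hx a := S.smul_mem c (hx a)

def colsInEquiv (κ : Type*) (S : Submodule ℂ (ι → ℂ)) : colsIn κ S ≃ₗ[ℂ] (κ → S) where
  toFun x a := ⟨fun i => x.1 (i, a), x.2 a⟩
  invFun y := ⟨fun q => (y q.2).1 q.1, fun a => (y a).2⟩
  map_add' _ _ := rfl
  map_smul' _ _ := rfl
  left_inv _ := rfl
  right_inv _ := rfl

theorem finrank_colsIn [Fintype ι] [Fintype κ] (S : Submodule ℂ (ι → ℂ)) :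
    finrank ℂ (colsIn κ S) = finrank ℂ S * Fintype.card κ := by
  rw [(colsInEquiv κ S).finrank_eq, Module.finrank_pi_fintype, Finset.sum_const,
    Finset.card_univ, smul_eq_mul, mul_comm]

theorem mem_colsIn_of_forall_dotProduct_eq_zero [Fintype ι] [Fintype κ] [DecidableEq κ]
    {E F : Submodule ℂ (ι → ℂ)} (hEF : IsCompl E F) (hortho : IsDotOrtho E F) {w : ι × κ → ℂ}
    (hw : ∀ x ∈ colsIn κ F, x ⬝ᵥ star w = 0) : w ∈ colsIn κ E := by
  intro a
  refine hortho.mem_of_forall_dotProduct_eq_zero hEF fun y hy => ?_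
  have hcol : (fun q : ι × κ => if q.2 = a then y q.1 else 0) ∈ colsIn κ F := fun b => by
    by_cases hb : b = a
    · simpa [hb] using hy
    · simp only [hb, if_false]
      exact F.zero_mem
  have h := hw _ hcol
  simp only [dotProduct, Fintype.sum_prod_type, ite_mul, zero_mul, Finset.sum_ite_eq',
    Finset.mem_univ, if_true, Pi.star_apply] at h
  rw [dotProduct_star, show y ⬝ᵥ star (fun i => w (i, a)) = 0 from h, star_zero]

end Orthogonality

variable {n r N : ℕ}

namespace CurvTensor

/-- The endomorphism `R(∂_α, ∂̄_β)` of `E_x`: its entry `(j, i)` is `R_{i j̄ α β̄}`. -/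
def slice (R : CurvTensor n r) (α β : Fin n) : Matrix (Fin r) (Fin r) ℂ :=
  Matrix.of fun j i => R i j α β

def swapTangent (R : CurvTensor n r) : CurvTensor n r := fun i j α β => R i j β α

def compress (R : CurvTensor n r) (K : Matrix (Fin r) (Fin r) ℂ) : CurvTensor n r :=
  fun i j α β => (Kᴴ * R.slice α β * K) j i

def nakanoMatrix (R : CurvTensor n r) : Matrix (Fin r × Fin n) (Fin r × Fin n) ℂ :=
  Matrix.of fun q q' => R q'.1 q.1 q'.2 q.2

theorem sum_sum_mul_mul_star_eq_dotProduct_slice (R : CurvTensor n r) (α β : Fin n)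
    (ξ η : Fin r → ℂ) :
    ∑ i, ∑ j, R i j α β * ξ i * starRingEnd ℂ (η j) = star η ⬝ᵥ (R.slice α β *ᵥ ξ) := by
  simp only [dotProduct, mulVec, slice, of_apply, Pi.star_apply, Finset.mul_sum]
  rw [Finset.sum_comm]
  exact Fintype.sum_congr _ _ fun j => Fintype.sum_congr _ _ fun i => by
    rw [starRingEnd_apply]; ring

theorem nakanoQ_eq_sum_slice (R : CurvTensor n r) (u : Fin r → Fin n → ℂ) :
    nakanoQ R u = ∑ α, ∑ β, star (fun j => u j β) ⬝ᵥ (R.slice α β *ᵥ fun i => u i α) := by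
  simp only [← sum_sum_mul_mul_star_eq_dotProduct_slice, nakanoQ]
  refine (Finset.sum_congr rfl fun i _ => Finset.sum_comm.trans
    (Finset.sum_congr rfl fun α _ => Finset.sum_comm)).trans ?_
  exact Finset.sum_comm.trans (Finset.sum_congr rfl fun α _ => Finset.sum_comm)

theorem nakanoQ_eq_dotProduct_nakanoMatrix (R : CurvTensor n r) (u : Fin r → Fin n → ℂ) :
    nakanoQ R u = star (Function.uncurry u) ⬝ᵥ (R.nakanoMatrix *ᵥ Function.uncurry u) := by
  simp only [dotProduct, mulVec, nakanoMatrix, of_apply, Fintype.sum_prod_type, Finset.mul_sum,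
    Pi.star_apply, Function.uncurry_apply_pair, nakanoQ]
  symm
  refine (Finset.sum_congr rfl fun j _ => Finset.sum_comm.trans
    (Finset.sum_congr rfl fun i _ => Finset.sum_comm)).trans (Finset.sum_comm.trans ?_)
  refine Fintype.sum_congr _ _ fun i => Fintype.sum_congr _ _ fun j =>
    Fintype.sum_congr _ _ fun α => Fintype.sum_congr _ _ fun β => ?_
  rw [starRingEnd_apply]
  ring

theorem nakanoQ_add (R S : CurvTensor n r) (u : Fin r → Fin n → ℂ) :
    nakanoQ (R + S) u = nakanoQ R u + nakanoQ S u := by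
  simp only [nakanoQ, Pi.add_apply, add_mul, Finset.sum_add_distrib]

theorem nakanoQ_zero_right (R : CurvTensor n r) : nakanoQ R 0 = 0 := by
  simp [nakanoQ]

theorem dualNakanoQ'_eq_nakanoQ_swapTangent (R : CurvTensor n r) (v : Fin r → Fin n → ℂ) :
    dualNakanoQ' R v = nakanoQ R.swapTangent v :=
  Finset.sum_congr rfl fun _ _ => Finset.sum_congr rfl fun _ _ => Finset.sum_comm

theorem slice_compress (R : CurvTensor n r) (K : Matrix (Fin r) (Fin r) ℂ) (α β : Fin n) :
    (R.compress K).slice α β = Kᴴ * R.slice α β * K := rfl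

theorem nakanoQ_compress (R : CurvTensor n r) (K : Matrix (Fin r) (Fin r) ℂ)
    (u : Fin r → Fin n → ℂ) :
    nakanoQ (R.compress K) u = nakanoQ R fun i α => (K *ᵥ fun k => u k α) i := by
  rw [nakanoQ_eq_sum_slice, nakanoQ_eq_sum_slice]
  simp only [slice_compress, dotProduct_conjTranspose_mul_mul_mulVec]

theorem compress_add_compress (R : CurvTensor n r) {P Q : Matrix (Fin r) (Fin r) ℂ}
    (hsum : P + Q = 1) (hPQ : ∀ α β, Pᴴ * R.slice α β * Q = 0)
    (hQP : ∀ α β, Qᴴ * R.slice α β * P = 0) : R.compress P + R.compress Q = R := by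
  funext i j α β
  have h : (P + Q)ᴴ * R.slice α β * (P + Q) = Pᴴ * R.slice α β * P + Qᴴ * R.slice α β * Q := by
    simp only [conjTranspose_add, Matrix.add_mul, Matrix.mul_add, hPQ, hQP, add_zero, zero_add]
  rw [hsum, conjTranspose_one, Matrix.one_mul, Matrix.mul_one] at h
  exact (congrFun (congrFun h j) i).symm

end CurvTensor

namespace IsHermitianCurv

variable {R : CurvTensor n r}

theorem swapTangent (hR : IsHermitianCurv R) : IsHermitianCurv R.swapTangent :=
  fun i j α β => hR i j β α

theorem conjTranspose_slice (hR : IsHermitianCurv R) (α β : Fin n) :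
    (R.slice β α)ᴴ = R.slice α β := by
  ext j i
  exact (hR i j α β).symm

theorem compress (hR : IsHermitianCurv R) (K : Matrix (Fin r) (Fin r) ℂ) :
    IsHermitianCurv (R.compress K) := fun i j α β => by
  change _ = star ((Kᴴ * R.slice β α * K) i j)
  rw [← conjTranspose_apply, conjTranspose_mul, conjTranspose_mul, conjTranspose_conjTranspose,
    hR.conjTranspose_slice, ← mul_assoc]
  rfl

theorem isHermitian_nakanoMatrix (hR : IsHermitianCurv R) : R.nakanoMatrix.IsHermitian := by
  ext q q'
  exact (hR q'.1 q.1 q'.2 q.2).symm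

end IsHermitianCurv

/-- The coefficients of `B ∧ B̄ᵀ` for an `r × N` matrix `B` of `(0,1)`-forms. -/
def gramTensor (B : Fin r → Fin N → Fin n → ℂ) : CurvTensor n r :=
  fun i j α β => ∑ p, B j p β * starRingEnd ℂ (B i p α)

theorem hasDecomp_iff {R : CurvTensor n r} {A B : Fin r → Fin N → Fin n → ℂ} :
    HasDecomp R A B ↔ R = (gramTensor A).swapTangent + gramTensor B := by
  simp only [funext_iff]
  rfl

theorem mem_vecSpan (B : Fin r → Fin N → Fin n → ℂ) (p : Fin N) (α : Fin n) :
    (fun i => B i p α) ∈ vecSpan B :=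
  Submodule.subset_span ⟨α, p, rfl⟩

theorem rank_coeffMat_le (C : Fin r → Fin N → Fin n → ℂ) :
    (coeffMat C).rank ≤ finrank ℂ (vecSpan C) * n := by
  calc (coeffMat C).rank = finrank ℂ (Submodule.span ℂ (Set.range (coeffMat C).row)) :=
        rank_eq_finrank_span_row _
    _ ≤ finrank ℂ (colsIn (Fin n) (vecSpan C)) := Submodule.finrank_mono <|
        Submodule.span_le.mpr <| Set.range_subset_iff.mpr fun p α => mem_vecSpan C p α
    _ = finrank ℂ (vecSpan C) * n := by rw [finrank_colsIn, Fintype.card_fin]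

theorem nakanoMatrix_gramTensor (B : Fin r → Fin N → Fin n → ℂ) :
    (gramTensor B).nakanoMatrix = (coeffMat B)ᵀ * (coeffMat B)ᴴᵀ := by
  ext q q'
  simp [CurvTensor.nakanoMatrix, gramTensor, coeffMat, mul_apply]

theorem nakanoQ_gramTensor (B : Fin r → Fin N → Fin n → ℂ) (u : Fin r → Fin n → ℂ) :
    nakanoQ (gramTensor B) u =
      (Function.uncurry u ᵥ* (coeffMat B)ᴴ) ⬝ᵥ star (Function.uncurry u ᵥ* (coeffMat B)ᴴ) := by
  rw [CurvTensor.nakanoQ_eq_dotProduct_nakanoMatrix, nakanoMatrix_gramTensor, ← mulVec_mulVec,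
    dotProduct_mulVec, vecMul_transpose, mulVec_transpose, star_vecMul,
    conjTranspose_conjTranspose, dotProduct_comm]

theorem exists_eq_gramTensor_of_posSemidef {T : CurvTensor n r}
    (hT : T.nakanoMatrix.PosSemidef) : ∃ B : Fin r → Fin (r * n) → Fin n → ℂ, T = gramTensor B := by
  open scoped MatrixOrder in
  obtain ⟨C, hC⟩ := CStarAlgebra.nonneg_iff_eq_star_mul_self.mp hT.nonneg
  refine ⟨fun i p α => starRingEnd ℂ (C (finProdFinEquiv.symm p) (i, α)), ?_⟩
  funext i j α β
  change T.nakanoMatrix (j, β) (i, α) = _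
  rw [hC, star_eq_conjTranspose, mul_apply, ← finProdFinEquiv.symm.sum_comp]
  simp [gramTensor]

theorem dotProduct_slice_gramTensor (B : Fin r → Fin N → Fin n → ℂ) (α β : Fin n)
    (ξ η : Fin r → ℂ) :
    star η ⬝ᵥ ((gramTensor B).slice α β *ᵥ ξ) =
      ∑ p, ((fun i => B i p β) ⬝ᵥ star η) * (ξ ⬝ᵥ star fun i => B i p α) := by
  simp only [dotProduct, mulVec, CurvTensor.slice, gramTensor, of_apply, Finset.sum_mul,
    Finset.mul_sum, Pi.star_apply]
  refine (Finset.sum_congr rfl fun j _ => Finset.sum_comm).trans (Finset.sum_comm.trans ?_)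
  refine Fintype.sum_congr _ _ fun p => Finset.sum_comm.trans ?_
  refine Fintype.sum_congr _ _ fun i => Fintype.sum_congr _ _ fun j => ?_
  rw [starRingEnd_apply]
  ring

theorem dotProduct_slice_gramTensor_eq_zero {B : Fin r → Fin N → Fin n → ℂ} {ξ η : Fin r → ℂ}
    (h : (∀ x ∈ vecSpan B, ξ ⬝ᵥ star x = 0) ∨ ∀ x ∈ vecSpan B, η ⬝ᵥ star x = 0)
    (α β : Fin n) : star η ⬝ᵥ ((gramTensor B).slice α β *ᵥ ξ) = 0 := by
  rw [dotProduct_slice_gramTensor]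
  refine Finset.sum_eq_zero fun p _ => ?_
  rcases h with h | h
  · rw [h _ (mem_vecSpan B p α), mul_zero]
  · rw [dotProduct_star, h _ (mem_vecSpan B p β), star_zero, zero_mul]

theorem dotProduct_slice_swapTangent_add (A B : Fin r → Fin N → Fin n → ℂ) (α β : Fin n)
    (ξ η : Fin r → ℂ) :
    star η ⬝ᵥ (((gramTensor A).swapTangent + gramTensor B).slice α β *ᵥ ξ) =
      star η ⬝ᵥ ((gramTensor A).slice β α *ᵥ ξ) + star η ⬝ᵥ ((gramTensor B).slice α β *ᵥ ξ) := by
  rw [← dotProduct_add, ← add_mulVec]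
  rfl

theorem nakanoQ_swapTangent_gramTensor_eq_zero {A : Fin r → Fin N → Fin n → ℂ}
    {u : Fin r → Fin n → ℂ} (hu : ∀ α, ∀ x ∈ vecSpan A, (fun i => u i α) ⬝ᵥ star x = 0) :
    nakanoQ (gramTensor A).swapTangent u = 0 := by
  rw [CurvTensor.nakanoQ_eq_sum_slice]
  exact Finset.sum_eq_zero fun α _ => Finset.sum_eq_zero fun β _ =>
    dotProduct_slice_gramTensor_eq_zero (Or.inl (hu α)) β α

theorem nakanoQ_pos_of_rank_eq {A B : Fin r → Fin N → Fin n → ℂ}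
    (hAB : IsDotOrtho (vecSpan A) (vecSpan B))
    (hrank : (coeffMat B).rank = finrank ℂ (vecSpan B) * n) {u : Fin r → Fin n → ℂ}
    (hu : ∀ α, (fun i => u i α) ∈ vecSpan B) (hu0 : u ≠ 0) :
    0 < nakanoQ ((gramTensor A).swapTangent + gramTensor B) u := by
  rw [CurvTensor.nakanoQ_add,
    nakanoQ_swapTangent_gramTensor_eq_zero fun α x hx => hAB.symm _ (hu α) x hx, zero_add,
    nakanoQ_gramTensor, dotProduct_self_star_pos_iff]
  have hinj := ((coeffMat B).rank_eq_finrank_iff_vecMul_conjTranspose_injOn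
    (S := colsIn (Fin n) (vecSpan B)) fun p α => mem_vecSpan B p α).mp
    (by rw [finrank_colsIn, Fintype.card_fin, hrank])
  exact fun h => hu0 <| funext fun i => funext fun α =>
    congrFun (hinj (Function.uncurry u) hu h) (i, α)

theorem isCompl_vecSpan_of_rank_eq {A B : Fin r → Fin N → Fin n → ℂ} (hn : 0 < n)
    (hAB : IsDotOrtho (vecSpan A) (vecSpan B))
    (hrkA : (coeffMat A).rank = (r - finrank ℂ (vecSpan B)) * n) :
    IsCompl (vecSpan B) (vecSpan A) ∧ finrank ℂ (vecSpan A) = r - finrank ℂ (vecSpan B) := by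
  have hle := Submodule.finrank_add_finrank_le_of_disjoint hAB.disjoint
  have hge := Nat.le_of_mul_le_mul_right (hrkA ▸ rank_coeffMat_le A) hn
  rw [Module.finrank_fin_fun] at hle
  refine ⟨(Submodule.isCompl_iff_disjoint _ _ ?_).mpr hAB.symm.disjoint, by omega⟩
  rw [Module.finrank_fin_fun]
  omega

theorem typeIIAt_of_hasDecomp {R : CurvTensor n r} {A B : Fin r → Fin N → Fin n → ℂ}
    (hR : HasDecomp R A B) (hAB : IsDotOrtho (vecSpan A) (vecSpan B))
    (hrkB : (coeffMat B).rank = finrank ℂ (vecSpan B) * n)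
    (hrkA : (coeffMat A).rank = (r - finrank ℂ (vecSpan B)) * n) :
    TypeIIAt (fun c => 0 < c) R := by
  rcases Nat.eq_zero_or_pos n with rfl | hn
  · refine ⟨⊤, ⊥, isCompl_top_bot, fun _ _ _ hη => ?_, fun _ _ _ _ α => α.elim0,
      fun u _ hu => absurd (Subsingleton.elim u 0) hu,
      fun v _ hv => absurd (Subsingleton.elim v 0) hv⟩
    simp [(Submodule.mem_bot ℂ).mp hη]
  obtain ⟨hcompl, hfinrank⟩ := isCompl_vecSpan_of_rank_eq hn hAB hrkA
  rw [hasDecomp_iff] at hR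
  subst hR
  refine ⟨vecSpan B, vecSpan A, hcompl, hAB.symm, fun ξ hξ η hη α β => ⟨?_, ?_⟩,
    fun u hu hu0 => ?_, fun v hv hv0 => ?_⟩
  · rw [CurvTensor.sum_sum_mul_mul_star_eq_dotProduct_slice, dotProduct_slice_swapTangent_add,
      dotProduct_slice_gramTensor_eq_zero (Or.inl (hAB.symm ξ hξ)),
      dotProduct_slice_gramTensor_eq_zero (Or.inr (hAB η hη)), add_zero]
  · rw [CurvTensor.sum_sum_mul_mul_star_eq_dotProduct_slice, dotProduct_slice_swapTangent_add,
      dotProduct_slice_gramTensor_eq_zero (Or.inr (hAB.symm ξ hξ)),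
      dotProduct_slice_gramTensor_eq_zero (Or.inl (hAB η hη)), add_zero]
  · exact Complex.exists_pos_ofReal_eq_iff_pos.mpr (nakanoQ_pos_of_rank_eq hAB hrkB hu hu0)
  · rw [CurvTensor.dualNakanoQ'_eq_nakanoQ_swapTangent, Complex.exists_pos_ofReal_eq_iff_pos,
      show ((gramTensor A).swapTangent + gramTensor B).swapTangent =
        (gramTensor B).swapTangent + gramTensor A from add_comm _ _]
    exact nakanoQ_pos_of_rank_eq hAB.symm (hfinrank ▸ hrkA) hv hv0

section Projection

variable {S : CurvTensor n r} {E F : Submodule ℂ (Fin r → ℂ)}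

theorem nakanoQ_compress_projection (hEF : IsCompl E F) (u : Fin r → Fin n → ℂ) :
    nakanoQ (S.compress (LinearMap.toMatrix' (E.projection F hEF))) u =
      nakanoQ S fun i α => E.projection F hEF (fun k => u k α) i := by
  simp only [CurvTensor.nakanoQ_compress, LinearMap.toMatrix'_mulVec]

theorem nakanoQ_compress_projection_nonneg (hEF : IsCompl E F)
    (hpos : ∀ u : Fin r → Fin n → ℂ, (∀ α, (fun i => u i α) ∈ E) → u ≠ 0 → 0 < nakanoQ S u)
    (u : Fin r → Fin n → ℂ) :
    0 ≤ nakanoQ (S.compress (LinearMap.toMatrix' (E.projection F hEF))) u := by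
  rw [nakanoQ_compress_projection]
  by_cases h : (fun i α => E.projection F hEF (fun k => u k α) i) = 0
  · rw [h, CurvTensor.nakanoQ_zero_right]
  · exact (hpos _ (fun α => Submodule.projection_apply_mem hEF _) h).le

theorem nakanoQ_compress_projection_eq_zero_iff (hEF : IsCompl E F)
    (hpos : ∀ u : Fin r → Fin n → ℂ, (∀ α, (fun i => u i α) ∈ E) → u ≠ 0 → 0 < nakanoQ S u)
    (u : Fin r → Fin n → ℂ) :
    nakanoQ (S.compress (LinearMap.toMatrix' (E.projection F hEF))) u = 0 ↔
      ∀ α, (fun i => u i α) ∈ F := by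
  have hzero : (fun i α => E.projection F hEF (fun k => u k α) i) = 0 ↔
      ∀ α, (fun i => u i α) ∈ F := by
    simp only [← Submodule.projection_apply_eq_zero_iff hEF, funext_iff, Pi.zero_apply]
    exact forall_comm
  rw [nakanoQ_compress_projection]
  refine ⟨fun h => hzero.mp ?_, fun h => by rw [hzero.mpr h, CurvTensor.nakanoQ_zero_right]⟩
  by_contra hne
  exact (hpos _ (fun α => Submodule.projection_apply_mem hEF _) hne).ne' h

theorem exists_gramTensor_eq_compress_projection (hS : IsHermitianCurv S) (hEF : IsCompl E F)
    (hortho : IsDotOrtho E F)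
    (hpos : ∀ u : Fin r → Fin n → ℂ, (∀ α, (fun i => u i α) ∈ E) → u ≠ 0 → 0 < nakanoQ S u) :
    ∃ B : Fin r → Fin (r * n) → Fin n → ℂ,
      S.compress (LinearMap.toMatrix' (E.projection F hEF)) = gramTensor B ∧
      vecSpan B ≤ E ∧ (coeffMat B).rank = finrank ℂ E * n := by
  set P := LinearMap.toMatrix' (E.projection F hEF)
  have hpsd : (S.compress P).nakanoMatrix.PosSemidef :=
    .of_dotProduct_mulVec_nonneg (hS.compress P).isHermitian_nakanoMatrix fun x => by
      simpa only [CurvTensor.nakanoQ_eq_dotProduct_nakanoMatrix, Function.uncurry_curry] using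
        nakanoQ_compress_projection_nonneg hEF hpos (Function.curry x)
  obtain ⟨B, hB⟩ := exists_eq_gramTensor_of_posSemidef hpsd
  have hker (x : Fin r × Fin n → ℂ) : x ᵥ* (coeffMat B)ᴴ = 0 ↔ x ∈ colsIn (Fin n) F := by
    rw [← dotProduct_self_star_eq_zero, ← Function.uncurry_curry x, ← nakanoQ_gramTensor, ← hB]
    exact nakanoQ_compress_projection_eq_zero_iff hEF hpos _
  have hrows (p : Fin (r * n)) : coeffMat B p ∈ colsIn (Fin n) E :=
    mem_colsIn_of_forall_dotProduct_eq_zero hEF hortho fun x hx => congrFun ((hker x).mpr hx) p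
  refine ⟨B, hB, Submodule.span_le.mpr ?_, ?_⟩
  · rintro _ ⟨α, p, rfl⟩
    exact hrows p α
  · have hfinrank : finrank ℂ (colsIn (Fin n) E) = finrank ℂ E * n := by
      rw [finrank_colsIn, Fintype.card_fin]
    rw [← hfinrank, (coeffMat B).rank_eq_finrank_iff_vecMul_conjTranspose_injOn hrows]
    intro x hxE hx0
    funext ⟨i, α⟩
    exact congrFun (Submodule.disjoint_def.mp hEF.disjoint _ (hxE α) ((hker x).mp hx0 α)) i

end Projection

theorem hasDecomp_of_typeIIAt {R : CurvTensor n r} (hR : IsHermitianCurv R)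
    (h : TypeIIAt (fun c => 0 < c) R) :
    ∃ (N : ℕ) (A B : Fin r → Fin N → Fin n → ℂ),
      HasDecomp R A B ∧ IsDotOrtho (vecSpan A) (vecSpan B) ∧
      (coeffMat B).rank = finrank ℂ (vecSpan B) * n ∧
      (coeffMat A).rank = (r - finrank ℂ (vecSpan B)) * n := by
  obtain ⟨E₁, E₂, hE, hortho, hblock, hnak, hdual⟩ := h
  obtain ⟨B, hB, hBE, hrkB⟩ := exists_gramTensor_eq_compress_projection hR hE hortho
    fun u hu hu0 => Complex.exists_pos_ofReal_eq_iff_pos.mp (hnak u hu hu0)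
  obtain ⟨A, hA, hAE, hrkA⟩ := exists_gramTensor_eq_compress_projection hR.swapTangent hE.symm
    (IsDotOrtho.symm hortho) fun v hv hv0 => Complex.exists_pos_ofReal_eq_iff_pos.mp
      (R.dualNakanoQ'_eq_nakanoQ_swapTangent v ▸ hdual v hv hv0)
  have hcol {E F : Submodule ℂ (Fin r → ℂ)} (hEF : IsCompl E F) (j : Fin r) :
      (fun k => LinearMap.toMatrix' (E.projection F hEF) k j) ∈ E := by
    simp only [LinearMap.toMatrix'_apply]
    exact Submodule.projection_apply_mem hEF _
  have hsplit : R.compress (LinearMap.toMatrix' (E₁.projection E₂ hE)) +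
      R.compress (LinearMap.toMatrix' (E₂.projection E₁ hE.symm)) = R := by
    refine R.compress_add_compress ?_ (fun α β => ?_) (fun α β => ?_)
    · rw [← map_add, Submodule.projection_add_projection_eq_id, LinearMap.toMatrix'_id]
    all_goals
      ext j i
      rw [conjTranspose_mul_mul_apply, ← CurvTensor.sum_sum_mul_mul_star_eq_dotProduct_slice]
    · exact (hblock _ (hcol hE j) _ (hcol hE.symm i) α β).2
    · exact (hblock _ (hcol hE i) _ (hcol hE.symm j) α β).1
  have hfinrank : finrank ℂ E₁ + finrank ℂ E₂ = r := by
    rw [Submodule.finrank_add_eq_of_isCompl hE, Module.finrank_fin_fun]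
  have hrkB' : (coeffMat B).rank = finrank ℂ (vecSpan B) * n :=
    le_antisymm (rank_coeffMat_le B) (hrkB ▸ Nat.mul_le_mul_right n (Submodule.finrank_mono hBE))
  refine ⟨r * n, A, B, hasDecomp_iff.mpr ?_, (IsDotOrtho.symm hortho).mono hAE hBE, hrkB', ?_⟩
  · rw [← hA, ← hB, add_comm]
    exact hsplit.symm
  · rw [hrkA, show finrank ℂ E₂ = r - finrank ℂ E₁ by omega, Nat.sub_mul, Nat.sub_mul, ← hrkB,
      hrkB']

/-- criterion for strong decomposable positivity of type II: the
curvature tensor (in a unitary frame at a point) is strongly decomposably positive of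
type II iff `R = −B∧B̄ᵀ + A∧Āᵀ` where the `E`-valued vectors `𝒜_{αp} = ∑_i A_{ipα} e_i`
and `ℬ_{αp} = ∑_i B_{ipᾱ} e_i` span orthogonal subspaces of `E_x`, and the coefficient
matrices satisfy `rank 𝐁 = r₁·n` and `rank 𝐀 = (r − r₁)·n` with `r₁ = dim span{ℬ}`. -/
theorem typeII_pos_criterion {n r : ℕ} (R : CurvTensor n r) (hH : IsHermitianCurv R) :
    TypeIIAt (fun c => 0 < c) R ↔
      ∃ (N : ℕ) (A B : Fin r → Fin N → Fin n → ℂ),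
        HasDecomp R A B ∧
        (∀ x ∈ vecSpan A, ∀ y ∈ vecSpan B, (∑ i, x i * (starRingEnd ℂ) (y i)) = 0) ∧
        Matrix.rank (coeffMat B) = (Module.finrank ℂ (vecSpan B)) * n ∧
        Matrix.rank (coeffMat A) = (r - Module.finrank ℂ (vecSpan B)) * n :=
  ⟨hasDecomp_of_typeIIAt hH, fun ⟨_, _, _, hR, hAB, hrkB, hrkA⟩ =>
    typeIIAt_of_hasDecomp hR hAB hrkB hrkA⟩
end
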